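/- arXiv:2502.14371 — 3 statements merged into one kernel-verified Lean document; each statement's English description precedes it below -/
import Mathlib

section
/- (Nesting lemma.) Let H be a complete bipartite graph with finite parts (A,B) whose edge weights are drawn independently from a non-atomic probability distribution supported on [0,1]. Then almost surely, for every A' ⊆ A, B' ⊆ B and every r with 1 < r ≤ min(|A'|,|B'|), every vertex covered by the maximum-weight matching with r−1 edges in H[A',B'] is also covered by the maximum-weight matching with r edges in H[A',B']. -/
open MeasureTheory ProbabilityTheory Filter
open scoped ENNReal

namespace ClassEF

variable {A B : Type*}

/-- A set of edges of a bipartite graph is a matching if every vertex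
appears in at most one edge. -/
def IsMatching (M : Finset (A × B)) : Prop :=
  (∀ e ∈ M, ∀ e' ∈ M, e.1 = e'.1 → e = e') ∧
  (∀ e ∈ M, ∀ e' ∈ M, e.2 = e'.2 → e = e')

/-- Total weight of a set of edges. -/
def weightSum (w : A → B → ℝ) (M : Finset (A × B)) : ℝ :=
  ∑ e ∈ M, w e.1 e.2

/-- A left vertex is covered by a matching. -/
def coveredA (M : Finset (A × B)) (a : A) : Prop := ∃ b, (a, b) ∈ M

/-- A right vertex is covered by a matching. -/
def coveredB (M : Finset (A × B)) (b : B) : Prop := ∃ a, (a, b) ∈ M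

/-- `M` is a maximum-weight matching among the matchings with `r` edges in the
(complete bipartite) subgraph induced by `A'` and `B'`. -/
def IsMaxMatchingOfSize [DecidableEq A] [DecidableEq B]
    (w : A → B → ℝ) (A' : Finset A) (B' : Finset B) (r : ℕ)
    (M : Finset (A × B)) : Prop :=
  IsMatching M ∧ M ⊆ A' ×ˢ B' ∧ M.card = r ∧
  ∀ M' : Finset (A × B), IsMatching M' → M' ⊆ A' ×ˢ B' → M'.card = r →
    weightSum w M' ≤ weightSum w M

/-- `M` is a maximum-weight matching (among matchings of arbitrary size). -/
def IsMaxWeightMatching (w : A → B → ℝ) (M : Finset (A × B)) : Prop :=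
  IsMatching M ∧ ∀ M' : Finset (A × B), IsMatching M' → weightSum w M' ≤ weightSum w M

open scoped Classical in
/-- The assignment valuation: the maximum total weight of a matching between
the agents of `Np` and the items of `S`. -/
noncomputable def vval [DecidableEq A] [DecidableEq B]
    (w : A → B → ℝ) (Np : Finset A) (S : Finset B) : ℝ :=
  ((Np ×ˢ S).powerset.filter fun M => IsMatching M).sup'
    ⟨∅, by simp [IsMatching]⟩ (weightSum w)

/-- The set of items matched to an agent of `S` under the matching `M`. -/
def bundleOf [DecidableEq A] [DecidableEq B] (M : Finset (A × B)) (S : Finset A) : Finset B :=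
  (M.filter fun e => e.1 ∈ S).image Prod.snd

/-- The total utility received by the agents of `S` under the matching `M`. -/
def classUtil [DecidableEq A] (w : A → B → ℝ) (M : Finset (A × B)) (S : Finset A) : ℝ :=
  ∑ e ∈ M.filter (fun e => e.1 ∈ S), w e.1 e.2

/-- Class envy-freeness. -/
def ClassEnvyFree [DecidableEq A] [DecidableEq B] {k : ℕ}
    (w : A → B → ℝ) (cls : Fin k → Finset A) (M : Finset (A × B)) : Prop :=
  ∀ p q : Fin k, p ≠ q → vval w (cls p) (bundleOf M (cls q)) ≤ classUtil w M (cls p)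

/-- Item `j` is wasted for the matching `M`. -/
def Wasted [DecidableEq A] [DecidableEq B] {k : ℕ}
    (w : A → B → ℝ) (cls : Fin k → Finset A) (M : Finset (A × B)) (j : B) : Prop :=
  ((∀ i : A, (i, j) ∉ M) ∧
    ∃ p, vval w (cls p) (bundleOf M (cls p)) < vval w (cls p) (insert j (bundleOf M (cls p)))) ∨
  (∃ q, j ∈ bundleOf M (cls q) ∧
    vval w (cls q) (bundleOf M (cls q)) = vval w (cls q) ((bundleOf M (cls q)).erase j) ∧
    ∃ p, p ≠ q ∧
      vval w (cls p) (bundleOf M (cls p)) < vval w (cls p) (insert j (bundleOf M (cls p))))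

/-- A matching is non-wasteful if no item is wasted. -/
def NonWasteful [DecidableEq A] [DecidableEq B] {k : ℕ}
    (w : A → B → ℝ) (cls : Fin k → Finset A) (M : Finset (A × B)) : Prop :=
  ∀ j : B, ¬ Wasted w cls M j

/-- `cls` partitions the agents into `k` disjoint nonempty classes. -/
def IsClassPartition {n k : ℕ} (cls : Fin k → Finset (Fin n)) : Prop :=
  (∀ p, (cls p).Nonempty) ∧ (∀ p q : Fin k, p ≠ q → Disjoint (cls p) (cls q)) ∧
  Finset.univ.biUnion cls = (Finset.univ : Finset (Fin n))

/-- The maximum class size. -/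
def maxClassSize {n k : ℕ} (cls : Fin k → Finset (Fin n)) : ℕ :=
  Finset.univ.sup fun p => (cls p).card

/-- The minimum class size. -/
noncomputable def minClassSize {n k : ℕ} (cls : Fin k → Finset (Fin n)) : ℕ :=
  sInf (Set.range fun p => (cls p).card)

/-- Marginal value of the item `j` for the bundle `S` of a class with agent set `Np`. -/
noncomputable def marginalVal [DecidableEq A] [DecidableEq B]
    (w : A → B → ℝ) (Np : Finset A) (S : Finset B) (j : B) : ℝ :=
  vval w Np (insert j S) - vval w Np S

/-- The items remaining once each class `p` holds the bundle `Bu p`. -/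
def remainingItems [Fintype B] [DecidableEq B] {k : ℕ} (Bu : Fin k → Finset B) : Finset B :=
  Finset.univ \ Finset.univ.biUnion Bu

/-- One selection step of class `p` in the round-robin algorithm, acting on the
tuple of current bundles: if some remaining item has positive marginal value,
class `p` adds to its bundle a remaining item of maximum marginal value;
otherwise nothing happens. -/
def ClassStep [Fintype B] [DecidableEq A] [DecidableEq B] {k : ℕ}
    (w : A → B → ℝ) (cls : Fin k → Finset A) (p : Fin k)
    (Bu Bu' : Fin k → Finset B) : Prop :=
  (∃ j ∈ remainingItems Bu,
      0 < marginalVal w (cls p) (Bu p) j ∧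
      (∀ j' ∈ remainingItems Bu,
        marginalVal w (cls p) (Bu p) j' ≤ marginalVal w (cls p) (Bu p) j) ∧
      Bu' = Function.update Bu p (insert j (Bu p))) ∨
  ((∀ j ∈ remainingItems Bu, marginalVal w (cls p) (Bu p) j ≤ 0) ∧ Bu' = Bu)

/-- One round of the round-robin algorithm: the classes `p = 0, …, k-1` perform
their selection steps in increasing order. -/
def RoundStep [Fintype B] [DecidableEq A] [DecidableEq B] {k : ℕ}
    (w : A → B → ℝ) (cls : Fin k → Finset A) (Bu Bu' : Fin k → Finset B) : Prop :=
  ∃ f : Fin (k + 1) → Fin k → Finset B,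
    f 0 = Bu ∧ f (Fin.last k) = Bu' ∧
    ∀ p : Fin k, ClassStep w cls p (f p.castSucc) (f p.succ)

/-- `M` is a possible output of the round-robin algorithm: starting from empty
bundles, rounds are performed until no class assigns positive marginal value to
any remaining item, and `M` is obtained by matching each class `p` with its final
bundle `Bu p` via a maximum-weight matching. -/
def IsRoundRobinOutput [Fintype B] [DecidableEq A] [DecidableEq B] {k : ℕ}
    (w : A → B → ℝ) (cls : Fin k → Finset A) (M : Finset (A × B)) : Prop :=
  ∃ Bu : Fin k → Finset B,
    Relation.ReflTransGen (RoundStep w cls) (fun _ => ∅) Bu ∧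
    (∀ p, ∀ j ∈ remainingItems Bu, marginalVal w (cls p) (Bu p) j ≤ 0) ∧
    IsMatching M ∧
    (∀ p : Fin k, ∀ e ∈ M, e.1 ∈ cls p → e.2 ∈ Bu p) ∧
    (∀ p : Fin k, classUtil w M (cls p) = vval w (cls p) (Bu p))

/-- An `(α,β)`-PDF-bounded distribution on `[0,1]`: it has a density bounded
between `a` and `b` on `[0,1]` and vanishing outside `[0,1]`. -/
def PDFBounded (D : Measure ℝ) (a b : ℝ) : Prop :=
  ∃ f : ℝ → ℝ,
    (∀ x ∈ Set.Icc (0 : ℝ) 1, a ≤ f x ∧ f x ≤ b) ∧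
    (∀ x, x ∉ Set.Icc (0 : ℝ) 1 → f x = 0) ∧
    D = MeasureTheory.volume.withDensity fun x => ENNReal.ofReal (f x)

/-- The reversed exponential distribution `ReExp(λ)`, with density
`λ e^{-λ(1-x)}` on `(-∞, 1]`. -/
noncomputable def reExp (lam : ℝ) : Measure ℝ :=
  MeasureTheory.volume.withDensity fun x =>
    ENNReal.ofReal (if x ≤ 1 then lam * Real.exp (-lam * (1 - x)) else 0)

/-- An acceptable alternating path of length `ℓ` for the threshold `w0`, of the
matching `Mopt`, inside the bipartite graph on right vertex set `S`: it visits
distinct matched left vertices `i 0, …, i (ℓ-1)` and ends in an unmatched right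
vertex `j'`, and all its non-matching edges have weight at least `w0`. -/
def AcceptablePath (w : A → B → ℝ) (S : Finset B)
    (Mopt : Finset (A × B)) (w0 : ℝ) (ℓ : ℕ) : Prop :=
  ∃ hℓ : 0 < ℓ, ∃ (i : Fin ℓ → A) (b : Fin ℓ → B) (j' : B),
    Function.Injective i ∧
    (∀ t, (i t, b t) ∈ Mopt) ∧
    j' ∈ S ∧ (∀ a : A, (a, j') ∉ Mopt) ∧
    (∀ t : Fin ℓ, ∀ ht : (t : ℕ) + 1 < ℓ, w0 ≤ w (i t) (b ⟨(t : ℕ) + 1, ht⟩)) ∧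
    w0 ≤ w (i ⟨ℓ - 1, Nat.sub_lt hℓ Nat.one_pos⟩) j'

/-- An acceptable alternating cycle of length `ℓ` for the threshold `w0`, of the
matching `Mopt`: it visits distinct matched left vertices `i 0, …, i (ℓ-1)` and
all its non-matching edges have weight at least `w0`. -/
def AcceptableCycle (w : A → B → ℝ)
    (Mopt : Finset (A × B)) (w0 : ℝ) (ℓ : ℕ) : Prop :=
  ∃ hℓ : 0 < ℓ, ∃ (i : Fin ℓ → A) (b : Fin ℓ → B),
    Function.Injective i ∧
    (∀ t, (i t, b t) ∈ Mopt) ∧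
    ∀ t : Fin ℓ, w0 ≤ w (i t) (b ⟨((t : ℕ) + 1) % ℓ, Nat.mod_lt _ hℓ⟩)

end ClassEF

/-!
Almost surely the weights are generic: distinct edge sets have distinct total weights, since
the weight of any single edge is atomless and independent of all the others.

For generic weights let `M₁`, `M₂` be the maximum-weight matchings with `r` and `r + 1` edges,
and suppose an endpoint of `e ∈ M₁` is not covered by `M₂`. Exchanging between `M₁` and `M₂` a
union of components of `M₁ ∆ M₂` with as many `M₁`-edges as `M₂`-edges keeps both sizes, so by
optimality it changes neither weight, which genericity forbids unless the union is empty. A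
component spans at most one vertex more than it has edges, while its `M₂`-edges alone cover two
vertices each; hence its numbers of `M₁`- and `M₂`-edges differ by at most one, and the
component of `e`, which contains a vertex missed by `M₂`, has one `M₁`-edge more. As `M₂` has
one edge more than `M₁`, another component has one `M₂`-edge more, and the union of the two
components is balanced.
-/

namespace ProbabilityTheory

variable {Ω : Type*} [MeasurableSpace Ω] {μ : Measure Ω} [IsFiniteMeasure μ]

theorem IndepFun.measure_eq_eq_zero {X Y : Ω → ℝ} (hXY : IndepFun X Y μ) (hX : Measurable X)
    (hY : Measurable Y) [NullSingletonClass (μ.map X)] : μ {ω | X ω = Y ω} = 0 := by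
  have hdiag : MeasurableSet {p : ℝ × ℝ | p.1 = p.2} :=
    (isClosed_eq continuous_fst continuous_snd).measurableSet
  have hlaw : μ.map (fun ω => (Y ω, X ω)) = (μ.map Y).prod (μ.map X) :=
    (indepFun_iff_map_prod_eq_prod_map_map hY.aemeasurable hX.aemeasurable).1 hXY.symm
  have hslice (y : ℝ) : Prod.mk y ⁻¹' {p : ℝ × ℝ | p.1 = p.2} = {y} := by
    ext x; simp [eq_comm]
  calc μ {ω | X ω = Y ω}
      = μ.map (fun ω => (Y ω, X ω)) {p : ℝ × ℝ | p.1 = p.2} := by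
        rw [Measure.map_apply (hY.prodMk hX) hdiag]; congr 1; ext ω; simp [eq_comm]
    _ = 0 := by simp [hlaw, Measure.prod_apply hdiag, hslice]

/-- The sum vanishes only where `U i₀` equals a function of the other coordinates, which is
independent of `U i₀`. -/
theorem iIndepFun.ae_sum_mul_ne_zero {ι : Type*} [DecidableEq ι] {U : ι → Ω → ℝ}
    (hindep : iIndepFun U μ) (hmeas : ∀ i, Measurable (U i)) {s : Finset ι} {c : ι → ℝ}
    {i₀ : ι} (hi₀ : i₀ ∈ s) (hc : c i₀ ≠ 0) [NullSingletonClass (μ.map (U i₀))] :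
    ∀ᵐ ω ∂μ, ∑ i ∈ s, c i * U i ω ≠ 0 := by
  set rest : Ω → ℝ := fun ω => -(c i₀)⁻¹ * ∑ i : s.erase i₀, c i * U i ω
  have hindep_rest : IndepFun (U i₀) rest μ :=
    (hindep.indepFun_finset {i₀} (s.erase i₀) (by simp) hmeas).comp
      (measurable_pi_apply (⟨i₀, Finset.mem_singleton_self i₀⟩ : ({i₀} : Finset ι)))
      (show Measurable fun v : s.erase i₀ → ℝ => -(c i₀)⁻¹ * ∑ i : s.erase i₀, c i * v i by
        fun_prop)
  refine ae_iff.2 <| measure_mono_null (fun ω hω => ?_)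
    (hindep_rest.measure_eq_eq_zero (hmeas i₀) (by fun_prop))
  have hω : c i₀ * U i₀ ω + ∑ i ∈ s.erase i₀, c i * U i ω = 0 := by
    rw [Finset.add_sum_erase s (fun i => c i * U i ω) hi₀]; exact not_not.1 hω
  change U i₀ ω = -(c i₀)⁻¹ * ∑ i : s.erase i₀, c i * U i ω
  rw [Finset.sum_coe_sort (s.erase i₀) fun i => c i * U i ω]
  field_simp
  linarith

theorem iIndepFun.ae_injective_sum {ι : Type*} [Countable ι] [DecidableEq ι] {U : ι → Ω → ℝ}
    (hindep : iIndepFun U μ) (hmeas : ∀ i, Measurable (U i))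
    [∀ i, NullSingletonClass (μ.map (U i))] :
    ∀ᵐ ω ∂μ, Function.Injective fun S : Finset ι => ∑ i ∈ S, U i ω := by
  have hpair (S T : Finset ι) : ∀ᵐ ω ∂μ, S ≠ T → ∑ i ∈ S, U i ω ≠ ∑ i ∈ T, U i ω := by
    by_cases hST : S = T
    · exact ae_of_all _ fun _ h => absurd hST h
    obtain ⟨i₀, hi₀⟩ := Finset.symmDiff_nonempty.2 hST
    let c (i : ι) : ℝ := (if i ∈ S then 1 else 0) - (if i ∈ T then 1 else 0)
    have hc : c i₀ ≠ 0 := by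
      rcases Finset.mem_symmDiff.1 hi₀ with ⟨h, h'⟩ | ⟨h, h'⟩ <;> simp [c, h, h']
    filter_upwards [hindep.ae_sum_mul_ne_zero (c := c) hmeas
      (Finset.mem_union.2 ((Finset.mem_symmDiff.1 hi₀).imp And.left And.left)) hc]
      with ω hω _ hsum
    apply hω
    simp only [c, sub_mul, ite_mul, one_mul, zero_mul, Finset.sum_sub_distrib, Finset.sum_ite_mem]
    rw [Finset.union_inter_cancel_left, Finset.union_inter_cancel_right, hsum, sub_self]
  filter_upwards [ae_all_iff.2 fun S => ae_all_iff.2 (hpair S)] with ω hω S T hsum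
  by_contra hST
  exact hω S T hST hsum

end ProbabilityTheory

namespace ClassEF

theorem card_le_card_image_of_injOn {α γ : Type*} [DecidableEq γ] {S C : Finset α} {p : α → γ}
    (hp : Set.InjOn p S) (hSC : S ⊆ C) : S.card ≤ (C.image p).card :=
  Finset.card_le_card_of_injOn p (fun _ hx => Finset.mem_image_of_mem p (hSC hx)) hp

theorem card_lt_card_image_of_injOn {α γ : Type*} [DecidableEq γ] {S C : Finset α} {p : α → γ}
    {x : γ} (hp : Set.InjOn p S) (hSC : S ⊆ C) (hx : x ∈ C.image p) (hxS : x ∉ S.image p) :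
    S.card < (C.image p).card :=
  Finset.card_image_of_injOn hp ▸ Finset.card_lt_card
    ((Finset.ssubset_iff_of_subset (Finset.image_subset_image hSC)).2 ⟨x, hx, hxS⟩)

variable {A B : Type*}

def Touches (e f : A × B) : Prop := e.1 = f.1 ∨ e.2 = f.2

theorem Touches.symm {e f : A × B} (h : Touches e f) : Touches f e :=
  h.imp Eq.symm Eq.symm

theorem isMatching_iff_touches {M : Finset (A × B)} :
    IsMatching M ↔ ∀ e ∈ M, ∀ f ∈ M, Touches e f → e = f :=
  ⟨fun h e he f hf hef => hef.elim (h.1 e he f hf) (h.2 e he f hf),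
    fun h => ⟨fun e he f hf hef => h e he f hf (.inl hef),
      fun e he f hf hef => h e he f hf (.inr hef)⟩⟩

theorem IsMatching.mono {M N : Finset (A × B)} (h : IsMatching M) (hN : N ⊆ M) :
    IsMatching N :=
  ⟨fun e he f hf => h.1 e (hN he) f (hN hf), fun e he f hf => h.2 e (hN he) f (hN hf)⟩

theorem IsMatching.injOn_fst {M : Finset (A × B)} (h : IsMatching M) :
    Set.InjOn Prod.fst (M : Set (A × B)) :=
  fun e he f hf => h.1 e he f hf

theorem IsMatching.injOn_snd {M : Finset (A × B)} (h : IsMatching M) :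
    Set.InjOn Prod.snd (M : Set (A × B)) :=
  fun e he f hf => h.2 e he f hf

section Components

variable {D C E : Finset (A × B)} {e f : A × B}

/-- `C` is a union of connected components of `D`, edges being adjacent when they touch. -/
def IsClosedIn (D C : Finset (A × B)) : Prop :=
  C ⊆ D ∧ ∀ e ∈ C, ∀ f ∈ D, Touches e f → f ∈ C

open Classical in
noncomputable def component (D : Finset (A × B)) (e : A × B) : Finset (A × B) :=
  D.filter (Relation.ReflTransGen (fun x y => y ∈ D ∧ Touches x y) e)

theorem mem_component :
    f ∈ component D e ↔ f ∈ D ∧ Relation.ReflTransGen (fun x y => y ∈ D ∧ Touches x y) e f := by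
  classical
  simp [component]

theorem self_mem_component (he : e ∈ D) : e ∈ component D e :=
  mem_component.2 ⟨he, .refl⟩

theorem isClosedIn_component : IsClosedIn D (component D e) :=
  ⟨fun _ hf => (mem_component.1 hf).1, fun _ hf _ hg hfg =>
    mem_component.2 ⟨hg, (mem_component.1 hf).2.tail ⟨hg, hfg⟩⟩⟩

theorem isClosedIn_self : IsClosedIn D D :=
  ⟨subset_rfl, fun _ _ _ hf _ => hf⟩

theorem IsClosedIn.component_subset (hE : IsClosedIn D E) (he : e ∈ E) :
    component D e ⊆ E := by
  intro f hf
  have hreach := (mem_component.1 hf).2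
  clear hf
  induction hreach with
  | refl => exact he
  | tail _ hyz ih => exact hE.2 _ ih _ hyz.1 hyz.2

theorem exists_touches_of_reflTransGen {S : Finset (A × B)} (he : e ∈ S)
    (h : Relation.ReflTransGen (fun x y => y ∈ D ∧ Touches x y) e f) (hf : f ∉ S) :
    ∃ g ∈ S, ∃ g' ∈ component D e, g' ∉ S ∧ Touches g g' := by
  induction h with
  | refl => exact absurd he hf
  | @tail x y hex hxy ih =>
    by_cases hx : x ∈ S
    · exact ⟨x, hx, y, mem_component.2 ⟨hxy.1, hex.tail hxy⟩, hf, hxy.2⟩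
    · exact ih hx

end Components

section Counting

variable [DecidableEq A] [DecidableEq B] {D C C' E M : Finset (A × B)} {e : A × B}

theorem IsClosedIn.union (hC : IsClosedIn D C) (hE : IsClosedIn D E) : IsClosedIn D (C ∪ E) :=
  ⟨Finset.union_subset hC.1 hE.1, fun e he f hf hef => by
    rcases Finset.mem_union.1 he with he | he
    · exact Finset.mem_union_left _ (hC.2 e he f hf hef)
    · exact Finset.mem_union_right _ (hE.2 e he f hf hef)⟩

theorem IsClosedIn.sdiff (hE : IsClosedIn D E) (hC : IsClosedIn D C) : IsClosedIn D (E \ C) :=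
  ⟨Finset.sdiff_subset.trans hE.1, fun e he f hf hef => by
    rw [Finset.mem_sdiff] at he ⊢
    exact ⟨hE.2 e he.1 f hf hef, fun hfC => he.2 (hC.2 f hfC e (hE.1 he.1) hef.symm)⟩⟩

def numVertices (S : Finset (A × B)) : ℕ :=
  (S.image Prod.fst).card + (S.image Prod.snd).card

theorem numVertices_insert_le {S : Finset (A × B)} {g g' : A × B} (hg : g ∈ S)
    (h : Touches g g') : numVertices (insert g' S) ≤ numVertices S + 1 := by
  rw [numVertices, numVertices, Finset.image_insert, Finset.image_insert]
  rcases h with h | h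
  · rw [Finset.insert_eq_of_mem (h ▸ Finset.mem_image_of_mem _ hg)]
    have := Finset.card_insert_le g'.2 (S.image Prod.snd)
    omega
  · rw [Finset.insert_eq_of_mem (h ▸ Finset.mem_image_of_mem _ hg : g'.2 ∈ S.image Prod.snd)]
    have := Finset.card_insert_le g'.1 (S.image Prod.fst)
    omega

theorem numVertices_component_le (he : e ∈ D) :
    numVertices (component D e) ≤ (component D e).card + 1 := by
  set K := component D e
  -- A largest `S ⊆ K` containing `e` and satisfying the bound is all of `K`: otherwise an
  -- edge of `K` touching `S` from outside could be added, at the cost of at most one vertex.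
  let good := K.powerset.filter fun S => e ∈ S ∧ numVertices S ≤ S.card + 1
  have hgood : {e} ∈ good := Finset.mem_filter.2
    ⟨Finset.mem_powerset.2 (Finset.singleton_subset_iff.2 (self_mem_component he)),
      Finset.mem_singleton_self e, by simp [numVertices]⟩
  obtain ⟨S, hS, hmax⟩ := Finset.exists_max_image good Finset.card ⟨_, hgood⟩
  simp only [good, Finset.mem_filter, Finset.mem_powerset] at hS hmax
  obtain ⟨hSK, heS, hSV⟩ := hS
  by_cases hSeq : S = K
  · exact hSeq ▸ hSV
  obtain ⟨f, hfK, hfS⟩ := (Finset.ssubset_iff_of_subset hSK).1 (hSK.ssubset_of_ne hSeq)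
  obtain ⟨g, hg, g', hg'K, hg'S, hgg'⟩ :=
    exists_touches_of_reflTransGen heS (mem_component.1 hfK).2 hfS
  have := hmax (insert g' S) ⟨Finset.insert_subset hg'K hSK, Finset.mem_insert_of_mem heS, by
    rw [Finset.card_insert_of_notMem hg'S]; have := numVertices_insert_le hg hgg'; omega⟩
  rw [Finset.card_insert_of_notMem hg'S] at this
  omega

theorem IsMatching.two_mul_card_le_numVertices (h : IsMatching M) (hMC : M ⊆ C) :
    2 * M.card ≤ numVertices C := by
  have := card_le_card_image_of_injOn h.injOn_fst hMC
  have := card_le_card_image_of_injOn h.injOn_snd hMC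
  unfold numVertices
  omega

theorem IsMatching.two_mul_card_lt_numVertices (h : IsMatching M) (hMC : M ⊆ C) (he : e ∈ C)
    (hunc : ¬coveredA M e.1 ∨ ¬coveredB M e.2) : 2 * M.card < numVertices C := by
  have := card_le_card_image_of_injOn h.injOn_fst hMC
  have := card_le_card_image_of_injOn h.injOn_snd hMC
  unfold numVertices
  rcases hunc with hunc | hunc
  · have := card_lt_card_image_of_injOn h.injOn_fst hMC (Finset.mem_image_of_mem _ he)
      fun hM => hunc <| by
        obtain ⟨f, hf, hfe⟩ := Finset.mem_image.1 hM
        exact ⟨f.2, hfe ▸ hf⟩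
    omega
  · have := card_lt_card_image_of_injOn h.injOn_snd hMC (Finset.mem_image_of_mem _ he)
      fun hM => hunc <| by
        obtain ⟨f, hf, hfe⟩ := Finset.mem_image.1 hM
        exact ⟨f.1, hfe ▸ hf⟩
    omega

theorem card_inter_sdiff_add_card_inter (M : Finset (A × B)) (hCE : C ⊆ E) :
    (M ∩ (E \ C)).card + (M ∩ C).card = (M ∩ E).card := by
  rw [← Finset.inter_sdiff_assoc, ← Finset.card_sdiff_add_card_inter (M ∩ E) C,
    Finset.inter_assoc, Finset.inter_eq_right.2 hCE]

theorem card_inter_union_of_disjoint (M : Finset (A × B)) (h : Disjoint C C') :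
    (M ∩ (C ∪ C')).card = (M ∩ C).card + (M ∩ C').card := by
  rw [Finset.inter_union_distrib_left, Finset.card_union_of_disjoint
    (h.mono Finset.inter_subset_right Finset.inter_subset_right)]

theorem exists_component_card_inter_lt {M₁ M₂ : Finset (A × B)} (hE : IsClosedIn D E)
    (hlt : (M₁ ∩ E).card < (M₂ ∩ E).card) :
    ∃ e ∈ E, (M₁ ∩ component D e).card < (M₂ ∩ component D e).card := by
  induction hn : E.card using Nat.strong_induction_on generalizing E with
  | _ n ih =>
  obtain ⟨e, he⟩ : E.Nonempty :=
    (Finset.card_pos.1 (Nat.zero_lt_of_lt hlt)).mono Finset.inter_subset_right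
  by_cases hK : (M₁ ∩ component D e).card < (M₂ ∩ component D e).card
  · exact ⟨e, he, hK⟩
  have hKE := hE.component_subset he
  have hsplit₁ := card_inter_sdiff_add_card_inter M₁ hKE
  have hsplit₂ := card_inter_sdiff_add_card_inter M₂ hKE
  have hcard : (E \ component D e).card < n :=
    hn ▸ Finset.card_lt_card (Finset.sdiff_ssubset hKE ⟨e, self_mem_component (hE.1 he)⟩)
  obtain ⟨e', he', hlt'⟩ := ih _ hcard (hE.sdiff isClosedIn_component) (by omega) rfl
  exact ⟨e', Finset.sdiff_subset he', hlt'⟩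

end Counting

section Exchange

variable [DecidableEq A] [DecidableEq B] {M₁ M₂ C : Finset (A × B)}

theorem card_inter_add_card_inter_of_subset_symmDiff (hC : C ⊆ symmDiff M₁ M₂) :
    (M₁ ∩ C).card + (M₂ ∩ C).card = C.card := by
  rw [← Finset.card_union_of_disjoint]
  · congr 1
    ext e
    have := @hC e
    simp only [Finset.mem_union, Finset.mem_inter, Finset.mem_symmDiff] at this ⊢
    tauto
  · refine Finset.disjoint_left.2 fun e he₁ he₂ => ?_
    rcases Finset.mem_symmDiff.1 (hC (Finset.mem_inter.1 he₁).2) with h | h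
    · exact h.2 (Finset.mem_inter.1 he₂).1
    · exact h.2 (Finset.mem_inter.1 he₁).1

theorem card_inter_symmDiff_add_one {r : ℕ} (h₁ : M₁.card = r) (h₂ : M₂.card = r + 1) :
    (M₁ ∩ symmDiff M₁ M₂).card + 1 = (M₂ ∩ symmDiff M₁ M₂).card := by
  have hsdiff (X Y : Finset (A × B)) : X ∩ symmDiff X Y = X \ Y := by
    ext; simp only [Finset.mem_inter, Finset.mem_symmDiff, Finset.mem_sdiff]; tauto
  rw [hsdiff, symmDiff_comm, hsdiff]
  have h₁' := Finset.card_sdiff_add_card_inter M₁ M₂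
  have h₂' := Finset.card_sdiff_add_card_inter M₂ M₁
  rw [Finset.inter_comm] at h₂'
  omega

theorem not_touches_of_isClosedIn (h₂ : IsMatching M₂) (hC : IsClosedIn (symmDiff M₁ M₂) C)
    {e f : A × B} (he : e ∈ M₁ \ C) (hf : f ∈ M₂ ∩ C) : ¬Touches e f := by
  intro hef
  rw [Finset.mem_sdiff] at he
  rw [Finset.mem_inter] at hf
  by_cases he₂ : e ∈ M₂
  · exact he.2 ((isMatching_iff_touches.1 h₂ e he₂ f hf.1 hef) ▸ hf.2)
  · exact he.2 (hC.2 f hf.2 e (Finset.mem_symmDiff.2 (.inl ⟨he.1, he₂⟩)) hef.symm)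

theorem IsMatching.exchange (h₁ : IsMatching M₁) (h₂ : IsMatching M₂)
    (hC : IsClosedIn (symmDiff M₁ M₂) C) : IsMatching (M₁ \ C ∪ M₂ ∩ C) := by
  have hsep {e f : A × B} (he : e ∈ M₁ \ C) (hf : f ∈ M₂ ∩ C) : ¬Touches e f :=
    not_touches_of_isClosedIn h₂ hC he hf
  rw [isMatching_iff_touches] at h₁ h₂ ⊢
  intro e he f hf hef
  rcases Finset.mem_union.1 he with he | he <;> rcases Finset.mem_union.1 hf with hf | hf
  · exact h₁ e (Finset.mem_sdiff.1 he).1 f (Finset.mem_sdiff.1 hf).1 hef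
  · exact absurd hef (hsep he hf)
  · exact absurd hef.symm (hsep hf he)
  · exact h₂ e (Finset.mem_inter.1 he).1 f (Finset.mem_inter.1 hf).1 hef

theorem weightSum_inter_le {w : A → B → ℝ} {A' : Finset A} {B' : Finset B} {r : ℕ}
    (hM₁ : IsMaxMatchingOfSize w A' B' r M₁) (h₂ : IsMatching M₂) (hs₂ : M₂ ⊆ A' ×ˢ B')
    (hC : IsClosedIn (symmDiff M₁ M₂) C) (hbal : (M₁ ∩ C).card = (M₂ ∩ C).card) :
    weightSum w (M₂ ∩ C) ≤ weightSum w (M₁ ∩ C) := by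
  obtain ⟨h₁, hs₁, hr, hopt⟩ := hM₁
  have hdisj : Disjoint (M₁ \ C) (M₂ ∩ C) :=
    Finset.disjoint_left.2 fun _ he hf => (Finset.mem_sdiff.1 he).2 (Finset.mem_inter.1 hf).2
  have hcard : (M₁ \ C ∪ M₂ ∩ C).card = r := by
    rw [Finset.card_union_of_disjoint hdisj, ← hbal, Finset.card_sdiff_add_card_inter, hr]
  have hle := hopt _ (h₁.exchange h₂ hC)
    (Finset.union_subset (Finset.sdiff_subset.trans hs₁) (Finset.inter_subset_left.trans hs₂))
    hcard
  have hsplit : weightSum w (M₁ ∩ C) + weightSum w (M₁ \ C) = weightSum w M₁ :=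
    Finset.sum_inter_add_sum_sdiff ..
  rw [weightSum, Finset.sum_union hdisj] at hle
  unfold weightSum at hsplit hle ⊢
  linarith

/-- Exchanging `C` in either direction cannot gain weight, so its two halves weigh the same. -/
theorem eq_empty_of_isClosedIn_of_card_inter_eq {w : A → B → ℝ}
    (hw : Function.Injective (weightSum w)) {A' : Finset A} {B' : Finset B} {r₁ r₂ : ℕ}
    (hM₁ : IsMaxMatchingOfSize w A' B' r₁ M₁) (hM₂ : IsMaxMatchingOfSize w A' B' r₂ M₂)
    (hC : IsClosedIn (symmDiff M₁ M₂) C) (hbal : (M₁ ∩ C).card = (M₂ ∩ C).card) : C = ∅ := by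
  have heq : M₁ ∩ C = M₂ ∩ C := hw <| le_antisymm
    (weightSum_inter_le hM₂ hM₁.1 hM₁.2.1 (symmDiff_comm M₁ M₂ ▸ hC) hbal.symm)
    (weightSum_inter_le hM₁ hM₂.1 hM₂.2.1 hC hbal)
  refine Finset.eq_empty_of_forall_notMem fun e he => ?_
  have := Finset.ext_iff.1 heq e
  simp only [Finset.mem_inter, he, and_true] at this
  rcases Finset.mem_symmDiff.1 (hC.1 he) with h | h
  · exact h.2 (this.1 h.1)
  · exact h.2 (this.2 h.1)

end Exchange

section Nesting

variable [DecidableEq A] [DecidableEq B] {M₁ M₂ C : Finset (A × B)} {e : A × B}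

theorem card_inter_le_card_inter_add_one (h₂ : IsMatching M₂) (hC : C ⊆ symmDiff M₁ M₂)
    (hV : numVertices C ≤ C.card + 1) : (M₂ ∩ C).card ≤ (M₁ ∩ C).card + 1 := by
  have := card_inter_add_card_inter_of_subset_symmDiff hC
  have := (h₂.mono Finset.inter_subset_left).two_mul_card_le_numVertices
    (Finset.inter_subset_right : M₂ ∩ C ⊆ C)
  omega

theorem card_inter_le_card_inter_of_not_covered (h₂ : IsMatching M₂) (hC : C ⊆ symmDiff M₁ M₂)
    (hV : numVertices C ≤ C.card + 1) (he : e ∈ C) (hunc : ¬coveredA M₂ e.1 ∨ ¬coveredB M₂ e.2) :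
    (M₂ ∩ C).card ≤ (M₁ ∩ C).card := by
  have := card_inter_add_card_inter_of_subset_symmDiff hC
  have := (h₂.mono Finset.inter_subset_left).two_mul_card_lt_numVertices
    (Finset.inter_subset_right : M₂ ∩ C ⊆ C) he
    (hunc.imp (fun h ⟨b, hb⟩ => h ⟨b, (Finset.mem_inter.1 hb).1⟩)
      (fun h ⟨a, ha⟩ => h ⟨a, (Finset.mem_inter.1 ha).1⟩))
  omega

/-- Since `M₂` has one edge more than `M₁`, a surplus of `M₁`-edges on `C` leaves a component
`C'` outside `C` with a surplus of `M₂`-edges, and then `C ∪ C'` is balanced. -/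
theorem card_inter_ne_card_inter_add_one {w : A → B → ℝ}
    (hw : Function.Injective (weightSum w)) {A' : Finset A} {B' : Finset B} {r : ℕ}
    (hM₁ : IsMaxMatchingOfSize w A' B' r M₁) (hM₂ : IsMaxMatchingOfSize w A' B' (r + 1) M₂)
    (hC : IsClosedIn (symmDiff M₁ M₂) C) (hCne : C.Nonempty) :
    (M₁ ∩ C).card ≠ (M₂ ∩ C).card + 1 := by
  intro hcard
  have hD := card_inter_symmDiff_add_one hM₁.2.2.1 hM₂.2.2.1
  have hE := isClosedIn_self.sdiff hC
  have hsplit₁ := card_inter_sdiff_add_card_inter M₁ hC.1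
  have hsplit₂ := card_inter_sdiff_add_card_inter M₂ hC.1
  obtain ⟨e, he, hlt⟩ := exists_component_card_inter_lt (M₁ := M₁) (M₂ := M₂) hE (by omega)
  have hC' := card_inter_le_card_inter_add_one hM₂.1 isClosedIn_component.1
    (numVertices_component_le (Finset.sdiff_subset he))
  have hdisj : Disjoint C (component (symmDiff M₁ M₂) e) :=
    Finset.disjoint_of_subset_right (hE.component_subset he) Finset.disjoint_sdiff
  obtain ⟨f, hf⟩ := hCne
  have hempty := eq_empty_of_isClosedIn_of_card_inter_eq hw hM₁ hM₂
    (hC.union isClosedIn_component)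
    (by rw [card_inter_union_of_disjoint _ hdisj, card_inter_union_of_disjoint _ hdisj]; omega)
  exact Finset.notMem_empty f (hempty ▸ Finset.mem_union_left _ hf)

theorem IsMaxMatchingOfSize.covered_of_mem {w : A → B → ℝ}
    (hw : Function.Injective (weightSum w)) {A' : Finset A} {B' : Finset B} {r : ℕ}
    (hM₁ : IsMaxMatchingOfSize w A' B' r M₁) (hM₂ : IsMaxMatchingOfSize w A' B' (r + 1) M₂)
    (he : e ∈ M₁) : coveredA M₂ e.1 ∧ coveredB M₂ e.2 := by
  by_contra hunc
  rw [not_and_or] at hunc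
  have heD : e ∈ symmDiff M₁ M₂ := Finset.mem_symmDiff.2
    (.inl ⟨he, fun he₂ => hunc.elim (· ⟨e.2, he₂⟩) (· ⟨e.1, he₂⟩)⟩)
  have hC := isClosedIn_component (D := symmDiff M₁ M₂) (e := e)
  have hV := numVertices_component_le heD
  have heC := self_mem_component heD
  have h₁ := card_inter_le_card_inter_of_not_covered hM₂.1 hC.1 hV heC hunc
  have h₂ := card_inter_le_card_inter_add_one (M₁ := M₂) hM₁.1 (symmDiff_comm M₁ M₂ ▸ hC.1) hV
  have h₃ := mt (eq_empty_of_isClosedIn_of_card_inter_eq hw hM₁ hM₂ hC)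
    (Finset.nonempty_iff_ne_empty.1 ⟨e, heC⟩)
  exact card_inter_ne_card_inter_add_one hw hM₁ hM₂ hC ⟨e, heC⟩ (by omega)

end Nesting

end ClassEF

open MeasureTheory ProbabilityTheory in
theorem stmt1_general {A B : Type} [Fintype A] [Fintype B] [DecidableEq A] [DecidableEq B]
    {Ω : Type} [MeasurableSpace Ω] (μ : Measure Ω) [IsProbabilityMeasure μ]
    (D : Measure ℝ)
    (hatom : ∀ x : ℝ, D {x} = 0)
    (U : A × B → Ω → ℝ)
    (hmeas : ∀ e, Measurable (U e))
    (hdist : ∀ e, μ.map (U e) = D)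
    (hindep : iIndepFun U μ) :
    ∀ᵐ ω ∂μ,
      ∀ (A' : Finset A) (B' : Finset B) (r : ℕ), 1 < r → r ≤ min A'.card B'.card →
      ∀ M₁ M₂ : Finset (A × B),
        ClassEF.IsMaxMatchingOfSize (fun a b => U (a, b) ω) A' B' (r - 1) M₁ →
        ClassEF.IsMaxMatchingOfSize (fun a b => U (a, b) ω) A' B' r M₂ →
        (∀ a : A, ClassEF.coveredA M₁ a → ClassEF.coveredA M₂ a) ∧
        (∀ b : B, ClassEF.coveredB M₁ b → ClassEF.coveredB M₂ b) := by
  have : NullSingletonClass D := ⟨hatom⟩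
  have (e : A × B) : NullSingletonClass (μ.map (U e)) := hdist e ▸ this
  filter_upwards [hindep.ae_injective_sum hmeas] with ω hω A' B' r hr _ M₁ M₂ hM₁ hM₂
  obtain ⟨k, rfl⟩ : ∃ k, r = k + 1 := ⟨r - 1, by omega⟩
  rw [Nat.add_sub_cancel] at hM₁
  exact ⟨fun a ⟨b, hab⟩ => (hM₁.covered_of_mem hω hM₂ hab).1,
    fun b ⟨a, hab⟩ => (hM₁.covered_of_mem hω hM₂ hab).2⟩

open MeasureTheory ProbabilityTheory in
/-- nesting lemma: almost surely, for all induced subgraphs and all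
sizes `1 < r ≤ min(|A'|,|B'|)`, every vertex covered by the maximum-weight matching
with `r-1` edges is also covered by the maximum-weight matching with `r` edges. -/
theorem stmt1 {A B : Type} [Fintype A] [Fintype B] [DecidableEq A] [DecidableEq B]
    {Ω : Type} [MeasurableSpace Ω] (μ : Measure Ω) [IsProbabilityMeasure μ]
    (D : Measure ℝ) [IsProbabilityMeasure D]
    (hsupp : D ((Set.Icc (0 : ℝ) 1)ᶜ) = 0)
    (hatom : ∀ x : ℝ, D {x} = 0)
    (U : A × B → Ω → ℝ)
    (hmeas : ∀ e, Measurable (U e))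
    (hdist : ∀ e, μ.map (U e) = D)
    (hindep : iIndepFun U μ) :
    ∀ᵐ ω ∂μ,
      ∀ (A' : Finset A) (B' : Finset B) (r : ℕ), 1 < r → r ≤ min A'.card B'.card →
      ∀ M₁ M₂ : Finset (A × B),
        ClassEF.IsMaxMatchingOfSize (fun a b => U (a, b) ω) A' B' (r - 1) M₁ →
        ClassEF.IsMaxMatchingOfSize (fun a b => U (a, b) ω) A' B' r M₂ →
        (∀ a : A, ClassEF.coveredA M₁ a → ClassEF.coveredA M₂ a) ∧
        (∀ b : B, ClassEF.coveredB M₁ b → ClassEF.coveredB M₂ b) :=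
  stmt1_general μ D hatom U hmeas hdist hindep
end

section
/- Suppose the utilities u_i(j) are drawn independently from a non-atomic distribution D on [0,1], and that Σ_{p=1}^{k} n_p ≤ m and m − Σ_{p=1}^{k−1} n_p + 1 > 0. Then the probability that there exist k pairwise disjoint bundles I_1,…,I_k ⊆ I with |I_p| = n_p and I_p maximizing v_p(I') over all bundles I' of size n_p, for every p, is at least exp( − k²·(max_{p∈[k]} n_p)² / (m − Σ_{p=1}^{k−1} n_p + 1) ). -/
open MeasureTheory ProbabilityTheory Filter
open scoped ENNReal

/-!
Push the utilities forward to the product measure `D^(N × I)`. Almost surely all utilities are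
positive and distinct sets of edges have distinct weights, so every class `p` has a unique favorite
bundle of size `n_p`; by symmetry under permutations of the items it is uniformly distributed,
each of the `C(m, n_p)` bundles having probability `1 / C(m, n_p)`. These events only involve the
utilities of the agents of `p`, so they are independent across classes. Summing over tuples of
pairwise disjoint bundles, chosen class by class, the favorite bundles are disjoint with
probability `∏_p C(m - s_p, n_p) / C(m, n_p)`, where `s_p = ∑_{q < p} n_q`. Finally
`C(m - s, n) / C(m, n) ≥ exp (-n (2 s + n) / (m - s + 1))` and
`∑_p n_p (2 s_p + n_p) = (∑_p n_p)^2 ≤ k^2 (max_p n_p)^2`.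
-/

namespace ClassEF

open Finset MeasureTheory ProbabilityTheory
open scoped ENNReal

section Matching

variable {A B : Type*} {M : Finset (A × B)}

theorem IsMatching.insert [DecidableEq A] [DecidableEq B] (hM : IsMatching M) {i : A} {j : B}
    (hi : ∀ b, (i, b) ∉ M) (hj : ∀ a, (a, j) ∉ M) : IsMatching (insert (i, j) M) := by
  refine ⟨fun e he e' he' h => ?_, fun e he e' he' h => ?_⟩ <;>
    rcases mem_insert.1 he with rfl | he <;> rcases mem_insert.1 he' with rfl | he'
  all_goals grind [IsMatching]

theorem IsMatching.card_image_fst [DecidableEq A] (hM : IsMatching M) :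
    (M.image Prod.fst).card = M.card :=
  card_image_of_injOn fun e he e' he' h => hM.1 e he e' he' h

theorem IsMatching.card_image_snd [DecidableEq B] (hM : IsMatching M) :
    (M.image Prod.snd).card = M.card :=
  card_image_of_injOn fun e he e' he' h => hM.2 e he e' he' h

end Matching

section Valuation

variable {A B : Type*} [DecidableEq A] [DecidableEq B] {w : A → B → ℝ} {Np : Finset A}
  {S : Finset B} {M : Finset (A × B)}

theorem weightSum_le_vval (hM : IsMatching M) (hsub : M ⊆ Np ×ˢ S) :
    weightSum w M ≤ vval w Np S := by
  classical
  exact le_sup' _ (mem_filter.2 ⟨mem_powerset.2 hsub, hM⟩)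

theorem vval_le {c : ℝ} (h : ∀ M, IsMatching M → M ⊆ Np ×ˢ S → weightSum w M ≤ c) :
    vval w Np S ≤ c := by
  classical
  refine sup'_le _ _ fun M hM => ?_
  rw [mem_filter, mem_powerset] at hM
  exact h M hM.2 hM.1

theorem exists_weightSum_eq_vval (w : A → B → ℝ) (Np : Finset A) (S : Finset B) :
    ∃ M, IsMatching M ∧ M ⊆ Np ×ˢ S ∧ weightSum w M = vval w Np S := by
  classical
  obtain ⟨M, hM, heq⟩ := exists_mem_eq_sup' (⟨∅, by simp [IsMatching]⟩ :
    ((Np ×ˢ S).powerset.filter fun M => IsMatching M).Nonempty) (weightSum w)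
  rw [mem_filter, mem_powerset] at hM
  exact ⟨M, hM.2, hM.1, heq.symm⟩

theorem vval_congr {w' : A → B → ℝ} (h : ∀ i ∈ Np, ∀ j ∈ S, w i j = w' i j) :
    vval w Np S = vval w' Np S := by
  have key : ∀ M ⊆ Np ×ˢ S, weightSum w M = weightSum w' M := fun M hsub =>
    sum_congr rfl fun e he => h e.1 (mem_product.1 (hsub he)).1 e.2 (mem_product.1 (hsub he)).2
  refine le_antisymm (vval_le fun M hM hsub => ?_) (vval_le fun M hM hsub => ?_)
  · exact (key M hsub).trans_le (weightSum_le_vval hM hsub)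
  · exact (key M hsub).symm.trans_le (weightSum_le_vval hM hsub)

theorem exists_weightSum_eq_vval_of_pos (hw : ∀ i ∈ Np, ∀ j ∈ S, 0 < w i j)
    (hcard : S.card ≤ Np.card) :
    ∃ M, IsMatching M ∧ M ⊆ Np ×ˢ S ∧ weightSum w M = vval w Np S ∧
      ∀ j ∈ S, ∃ i, (i, j) ∈ M := by
  obtain ⟨M, hM, hsub, heq⟩ := exists_weightSum_eq_vval w Np S
  refine ⟨M, hM, hsub, heq, ?_⟩
  by_contra! ⟨j, hjS, hj⟩
  have hsnd : M.image Prod.snd ⊆ S.erase j := fun b hb => by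
    obtain ⟨e, he, rfl⟩ := mem_image.1 hb
    exact mem_erase.2 ⟨fun h => hj e.1 (h ▸ he), (mem_product.1 (hsub he)).2⟩
  have hfst : M.image Prod.fst ⊆ Np := fun a ha => by
    obtain ⟨e, he, rfl⟩ := mem_image.1 ha
    exact (mem_product.1 (hsub he)).1
  have hlt : (M.image Prod.fst).card < Np.card := by
    have := card_le_card hsnd
    rw [hM.card_image_snd, card_erase_of_mem hjS] at this
    rw [hM.card_image_fst]
    have := card_pos.2 ⟨j, hjS⟩
    omega
  obtain ⟨i, hiN, hi⟩ := exists_mem_notMem_of_card_lt_card hlt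
  have hi' : ∀ b, (i, b) ∉ M := fun b hb => hi (mem_image_of_mem Prod.fst hb)
  have hle := weightSum_le_vval (w := w) (hM.insert hi' hj)
    (insert_subset (mem_product.2 ⟨hiN, hjS⟩) hsub)
  rw [weightSum, sum_insert (hi' j), ← weightSum, heq] at hle
  linarith [hw i hiN j hjS]

/-- Optimal matchings covering distinct bundles are distinct, hence (by injectivity of
`weightSum w`) have distinct weights. -/
theorem exists_forall_vval_lt [Fintype B] (hw : ∀ i j, 0 < w i j)
    (hinj : Function.Injective (weightSum w)) (hcard : Np.card ≤ Fintype.card B) :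
    ∃ T : Finset B, T.card = Np.card ∧
      ∀ T' : Finset B, T'.card = Np.card → T' ≠ T → vval w Np T' < vval w Np T := by
  have hne : (powersetCard Np.card (univ : Finset B)).Nonempty :=
    powersetCard_nonempty.2 (by simpa using hcard)
  obtain ⟨T, hT, hmax⟩ := exists_max_image _ (fun T => vval w Np T) hne
  rw [mem_powersetCard_univ] at hT
  refine ⟨T, hT, fun T' hT' hne' => (hmax T' (mem_powersetCard_univ.2 hT')).lt_of_ne ?_⟩
  intro heq
  obtain ⟨M, -, -, hMw, hMcov⟩ :=
    exists_weightSum_eq_vval_of_pos (fun i _ j _ => hw i j) hT.le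
  obtain ⟨M', -, hM'sub, hM'w, -⟩ :=
    exists_weightSum_eq_vval_of_pos (S := T') (fun i _ j _ => hw i j) hT'.le
  obtain ⟨j, hjT, hjT'⟩ : ∃ j ∈ T, j ∉ T' := by
    by_contra! h
    exact hne' (eq_of_subset_of_card_le h (by omega)).symm
  obtain ⟨i, hij⟩ := hMcov j hjT
  rw [hinj (hMw.trans (heq.symm.trans hM'w.symm))] at hij
  exact hjT' (mem_product.1 (hM'sub hij)).2

theorem vval_comp_le {B' : Type*} [DecidableEq B'] (σ : B' ≃ B) (S : Finset B') :
    vval (fun i j => w i (σ j)) Np S ≤ vval w Np (S.map σ.toEmbedding) := by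
  refine vval_le fun M hM hsub => ?_
  let f : A × B' ↪ A × B := (Equiv.prodCongr (Equiv.refl A) σ).toEmbedding
  have hmatch : IsMatching (M.map f) := by
    constructor <;> intro e he e' he' h <;> obtain ⟨a, ha, rfl⟩ := mem_map.1 he <;>
      obtain ⟨a', ha', rfl⟩ := mem_map.1 he'
    · rw [hM.1 a ha a' ha' h]
    · rw [hM.2 a ha a' ha' (σ.injective h)]
  have hsub' : M.map f ⊆ Np ×ˢ S.map σ.toEmbedding := fun e he => by
    obtain ⟨a, ha, rfl⟩ := mem_map.1 he
    obtain ⟨h1, h2⟩ := mem_product.1 (hsub ha)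
    exact mem_product.2 ⟨h1, mem_map_of_mem _ h2⟩
  simpa [weightSum, f] using weightSum_le_vval (w := w) hmatch hsub'

theorem vval_comp_equiv {B' : Type*} [DecidableEq B'] (σ : B' ≃ B) (S : Finset B') :
    vval (fun i j => w i (σ j)) Np S = vval w Np (S.map σ.toEmbedding) := by
  refine le_antisymm (vval_comp_le σ S) ?_
  simpa [Finset.map_map] using vval_comp_le (w := fun i j => w i (σ j)) σ.symm
    (S.map σ.toEmbedding)

theorem measurable_vval_curry (Np : Finset A) (S : Finset B) :
    Measurable fun u : A × B → ℝ => vval (Function.curry u) Np S := by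
  classical
  unfold vval
  convert Finset.measurable_sup' _
    (f := fun M (u : A × B → ℝ) => weightSum (Function.curry u) M) fun M _ => ?_ using 1
  · funext u; exact (Finset.sup'_apply _ _ u).symm
  · exact Finset.measurable_sum _ fun e _ => measurable_pi_apply e

end Valuation

theorem exists_perm_map_eq {B : Type*} [Fintype B] [DecidableEq B] {T T' : Finset B}
    (h : T.card = T'.card) : ∃ σ : Equiv.Perm B, T.map σ.toEmbedding = T' := by
  let e : T ≃ T' := Fintype.equivOfCardEq (by simpa using h)
  refine ⟨e.extendSubtype, eq_of_subset_of_card_le (fun b hb => ?_) (by simp [h])⟩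
  obtain ⟨a, ha, rfl⟩ := mem_map.1 hb
  exact e.extendSubtype_mem a ha

section ProductMeasure

variable {ι : Type*} [Fintype ι]

theorem measure_pi_inter_eq_mul_of_dependsOn {β : Type*} [MeasurableSpace β] [Nonempty β]
    {μ : ι → Measure β} [∀ i, IsProbabilityMeasure (μ i)] (s : Set ι)
    {E₁ E₂ : Set (ι → β)} (h₁ : MeasurableSet E₁) (h₂ : MeasurableSet E₂)
    (hd₁ : DependsOn (· ∈ E₁) s) (hd₂ : DependsOn (· ∈ E₂) sᶜ) :
    Measure.pi μ (E₁ ∩ E₂) = Measure.pi μ E₁ * Measure.pi μ E₂ := by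
  classical
  let e := MeasurableEquiv.piEquivPiSubtypeProd (fun _ : ι => β) (· ∈ s)
  have hmp := measurePreserving_piEquivPiSubtypeProd μ (· ∈ s)
  let x₀ := e fun _ => Classical.arbitrary β
  let A₁ := (fun a => e.symm (a, x₀.2)) ⁻¹' E₁
  let A₂ := (fun b => e.symm (x₀.1, b)) ⁻¹' E₂
  have hE₁ : E₁ = e ⁻¹' (A₁ ×ˢ Set.univ) := by
    ext x
    exact (@hd₁ x (e.symm ((e x).1, x₀.2)) fun i hi => by simp [e, hi]).to_iff.trans
      (by simp [A₁])
  have hE₂ : E₂ = e ⁻¹' (Set.univ ×ˢ A₂) := by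
    ext x
    exact (@hd₂ x (e.symm (x₀.1, (e x).2)) fun i hi => by
      simp [e, Set.notMem_of_mem_compl hi]).to_iff.trans (by simp [A₂])
  have hA₁ : MeasurableSet A₁ := (e.symm.measurable.comp measurable_prodMk_right) h₁
  have hA₂ : MeasurableSet A₂ := (e.symm.measurable.comp measurable_prodMk_left) h₂
  rw [hE₁, hE₂, ← Set.preimage_inter, Set.prod_inter_prod, hmp.measure_preimage_equiv,
    hmp.measure_preimage_equiv, hmp.measure_preimage_equiv, Measure.prod_prod, Measure.prod_prod,
    Measure.prod_prod]
  simp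

theorem measurePreserving_pi_comp_perm {β : Type*} [MeasurableSpace β] (D : Measure β)
    [SigmaFinite D] (σ : Equiv.Perm ι) :
    MeasurePreserving (fun u : ι → β => u ∘ σ) (Measure.pi fun _ => D)
      (Measure.pi fun _ => D) := by
  convert measurePreserving_arrowCongr' (fun _ => D) (fun _ => D) σ.symm (MeasurableEquiv.refl β)
    fun _ => MeasurePreserving.id D
  rfl

variable {μ : ι → Measure ℝ} [∀ i, IsProbabilityMeasure (μ i)]

theorem measure_pi_apply_eq_eq_zero {i₀ : ι} (hatom : ∀ x, μ i₀ {x} = 0)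
    {g : (ι → ℝ) → ℝ} (hg : Measurable g) (hdep : DependsOn g {i₀}ᶜ) :
    Measure.pi μ {x | x i₀ = g x} = 0 := by
  classical
  let e := MeasurableEquiv.piEquivPiSubtypeProd (fun _ : ι => ℝ) (· ≠ i₀)
  have hmp := measurePreserving_piEquivPiSubtypeProd μ (· ≠ i₀)
  let j₀ : {i // ¬ i ≠ i₀} := ⟨i₀, not_not.2 rfl⟩
  let S := {p : ({i // i ≠ i₀} → ℝ) × ({i // ¬ i ≠ i₀} → ℝ) |
    p.2 j₀ = g (e.symm (p.1, 0))}
  have hS : MeasurableSet S :=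
    measurableSet_eq_fun ((measurable_pi_apply j₀).comp measurable_snd)
      (hg.comp (e.symm.measurable.comp (measurable_fst.prodMk measurable_const)))
  have hset : {x | x i₀ = g x} = e ⁻¹' S := by
    ext x
    change x i₀ = g x ↔ (e x).2 j₀ = g (e.symm ((e x).1, 0))
    rw [hdep (y := e.symm ((e x).1, 0)) fun i hi => by
      simp [e, Set.mem_compl_singleton_iff.1 hi]]
    simp [e, j₀]
  -- Fubini: once the coordinates other than `i₀` are fixed, the slice is a single point.
  rw [hset, hmp.measure_preimage_equiv, Measure.prod_apply hS]
  refine lintegral_eq_zero_of_ae_eq_zero (Filter.Eventually.of_forall fun a => ?_)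
  have := (measurePreserving_eval (fun i : {i // ¬ i ≠ i₀} => μ i) j₀).measure_preimage
    (measurableSet_singleton (g (e.symm (a, 0)))).nullMeasurableSet
  exact this.trans (hatom _)

theorem measure_pi_sum_eq_sum_eq_zero [DecidableEq ι] (hatom : ∀ i x, μ i {x} = 0)
    {E₁ E₂ : Finset ι} {i₀ : ι} (h₁ : i₀ ∈ E₁) (h₂ : i₀ ∉ E₂) :
    Measure.pi μ {x | ∑ i ∈ E₁, x i = ∑ i ∈ E₂, x i} = 0 := by
  have hset : {x : ι → ℝ | ∑ i ∈ E₁, x i = ∑ i ∈ E₂, x i} =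
      {x | x i₀ = ∑ i ∈ E₂, x i - ∑ i ∈ E₁.erase i₀, x i} := by
    ext x
    simp only [Set.mem_ofPred_eq, ← add_sum_erase E₁ x h₁]
    constructor <;> intro h <;> linarith
  rw [hset]
  refine measure_pi_apply_eq_eq_zero (hatom i₀) (by fun_prop) fun x y hxy => ?_
  have hoff : ∀ E : Finset ι, i₀ ∉ E → ∑ i ∈ E, x i = ∑ i ∈ E, y i := fun E hE =>
    sum_congr rfl fun i hi => hxy i (Set.mem_compl_singleton_iff.2 (ne_of_mem_of_not_mem hi hE))
  rw [hoff E₂ h₂, hoff _ (notMem_erase i₀ E₁)]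

theorem ae_injective_sum [DecidableEq ι] (hatom : ∀ i x, μ i {x} = 0) :
    ∀ᵐ x ∂Measure.pi μ, Function.Injective fun E : Finset ι => ∑ i ∈ E, x i := by
  simp only [Function.Injective, ae_all_iff]
  intro E₁ E₂
  by_cases h : E₁ = E₂
  · simp [h]
  have hnull : Measure.pi μ {x | ∑ i ∈ E₁, x i = ∑ i ∈ E₂, x i} = 0 := by
    rcases not_and_or.1 fun h' => h (Subset.antisymm h'.1 h'.2) with h' | h'
    · obtain ⟨i₀, hi₁, hi₂⟩ := not_subset.1 h'
      exact measure_pi_sum_eq_sum_eq_zero hatom hi₁ hi₂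
    · obtain ⟨i₀, hi₂, hi₁⟩ := not_subset.1 h'
      simpa only [eq_comm] using measure_pi_sum_eq_sum_eq_zero hatom hi₂ hi₁
  filter_upwards [measure_eq_zero_iff_ae_notMem.1 hnull] with x hx heq using absurd heq hx

theorem ae_pos_of_measure_compl_Icc {D : Measure ℝ} (hsupp : D (Set.Icc 0 1)ᶜ = 0)
    (h0 : D {0} = 0) : ∀ᵐ x ∂D, 0 < x := by
  refine ae_iff.2 (measure_mono_null (fun x hx => ?_) (measure_union_null hsupp h0))
  by_cases h : x = 0
  · exact Or.inr h
  · exact Or.inl fun hx' => hx (lt_of_le_of_ne hx'.1 (Ne.symm h))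

end ProductMeasure

section Binomial

open Real

variable {m n s : ℕ}

theorem choose_le_choose_sub_mul_choose (h : n + s ≤ m) :
    m.choose n ≤ (m - s).choose n * (n + s).choose n := by
  have hfac : m.descFactorial n * n.descFactorial n ≤
      (m - s).descFactorial n * (n + s).descFactorial n := by
    simp only [Nat.descFactorial_eq_prod_range, ← prod_mul_distrib]
    refine prod_le_prod' fun i hi => ?_
    have hi := mem_range.1 hi
    obtain ⟨x, hx⟩ : ∃ x, m - s - i = x := ⟨_, rfl⟩
    obtain ⟨y, hy⟩ : ∃ y, n - i = y := ⟨_, rfl⟩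
    have hxy : y ≤ x := by omega
    rw [show m - i = x + s by omega, show n + s - i = y + s by omega, hx, hy]
    nlinarith [Nat.mul_le_mul_left s hxy]
  simp only [Nat.descFactorial_eq_factorial_mul_choose, Nat.choose_self, mul_one] at hfac
  refine Nat.le_of_mul_le_mul_left (?_ : n.factorial * n.factorial * _ ≤
    n.factorial * n.factorial * _) (Nat.mul_pos (Nat.factorial_pos n) (Nat.factorial_pos n))
  nlinarith

theorem choose_le_choose_sub_mul_exp_mul_div (h : n + s ≤ m) :
    (m.choose n : ℝ) ≤ (m - s).choose n * exp (n * s / (m - n - s + 1)) := by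
  set a : ℝ := m - n - s + 1
  have hm : (n + s : ℝ) ≤ m := by exact_mod_cast h
  have ha : 0 < a := by linarith
  have hfactor : ∀ i ∈ range n,
      ((m - i : ℕ) : ℝ) ≤ ((m - s - i : ℕ) : ℝ) * exp (s / a) := by
    intro i hi
    have hin := mem_range.1 hi
    have hi : (i + 1 : ℝ) ≤ n := by exact_mod_cast hin
    rw [Nat.cast_sub (by omega), Nat.cast_sub (by omega), Nat.cast_sub (by omega)]
    have hs : (s : ℝ) ≤ (m - s - i) * (s / a) := by
      rw [mul_div_assoc', le_div_iff₀ ha]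
      nlinarith [Nat.cast_nonneg (α := ℝ) s]
    calc (m : ℝ) - i ≤ (m - s - i) * (1 + s / a) := by linarith
      _ ≤ (m - s - i) * exp (s / a) := by
          gcongr
          · linarith
          · linarith [add_one_le_exp (s / a)]
  have hfac : (m.descFactorial n : ℝ) ≤ (m - s).descFactorial n * exp (n * s / a) := by
    rw [Nat.descFactorial_eq_prod_range, Nat.descFactorial_eq_prod_range, Nat.cast_prod,
      Nat.cast_prod, mul_div_assoc, exp_nat_mul]
    calc ∏ i ∈ range n, ((m - i : ℕ) : ℝ)
        ≤ ∏ i ∈ range n, ((m - s - i : ℕ) : ℝ) * exp (s / a) :=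
          prod_le_prod (fun i _ => Nat.cast_nonneg _) hfactor
      _ = _ := by rw [prod_mul_distrib, prod_const, card_range]
  simp only [Nat.descFactorial_eq_factorial_mul_choose, Nat.cast_mul] at hfac
  have hpos : (0 : ℝ) < n.factorial := by exact_mod_cast Nat.factorial_pos n
  nlinarith

theorem two_pow_add_le_exp {b : ℝ} (hb : 0 < b) (hn : b + 1 ≤ 2 * n) (hs : b + 1 ≤ n + s) :
    (2 : ℝ) ^ (n + s) ≤ exp (n * (2 * s + n) / b) := by
  rw [show (2 : ℝ) ^ (n + s) = exp ((n + s : ℕ) * log 2) by rw [exp_nat_mul, exp_log two_pos],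
    exp_le_exp, le_div_iff₀ hb, Nat.cast_add]
  have h1 : (n + s : ℝ) * log 2 * b ≤ (n + s) * (7 / 10) * b := by
    gcongr
    linarith [log_two_lt_d9]
  rcases le_total (n : ℝ) s with hns | hns <;> nlinarith

/-- With `a = m - n - s + 1`: if `min n s ≤ a`, the estimate of
`choose_le_choose_sub_mul_exp_mul_div` suffices; otherwise `m - s + 1 = a + n` is small and
`C(n + s, n) ≤ 2 ^ (n + s)` does. -/
theorem choose_le_choose_sub_mul_exp (h : n + s ≤ m) :
    (m.choose n : ℝ) ≤ (m - s).choose n * exp (n * (2 * s + n) / (m - s + 1)) := by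
  obtain ⟨a, ha⟩ : ∃ a, a = m - n - s + 1 := ⟨_, rfl⟩
  have ha' : (m : ℝ) - s + 1 = a + n := by
    rw [ha, Nat.cast_add, Nat.cast_sub (by omega), Nat.cast_sub (by omega)]; ring
  have ha0 : (1 : ℝ) ≤ a := by exact_mod_cast (show 1 ≤ a by omega)
  have hn0 : (0 : ℝ) ≤ n := Nat.cast_nonneg n
  have hs0 : (0 : ℝ) ≤ s := Nat.cast_nonneg s
  by_cases hcase : n ≤ a ∨ s ≤ a
  · refine (choose_le_choose_sub_mul_exp_mul_div h).trans
      (mul_le_mul_of_nonneg_left (exp_le_exp.2 ?_) (Nat.cast_nonneg _))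
    rw [show (m : ℝ) - n - s + 1 = a by linarith, ha',
      div_le_div_iff₀ (by linarith) (by linarith)]
    rcases hcase with h' | h' <;> have h'' := (Nat.cast_le (α := ℝ)).2 h'
    · nlinarith [mul_le_mul_of_nonneg_left h'' (mul_nonneg hn0 hs0), mul_nonneg hn0 hn0]
    · nlinarith [mul_le_mul_of_nonneg_left h'' (mul_nonneg hn0 hn0), mul_nonneg hn0 hs0]
  · push Not at hcase
    have hn : (a : ℝ) + 1 ≤ n := by exact_mod_cast hcase.1
    have hs : (a : ℝ) + 1 ≤ s := by exact_mod_cast hcase.2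
    calc (m.choose n : ℝ) ≤ (m - s).choose n * (n + s).choose n := by
          exact_mod_cast choose_le_choose_sub_mul_choose h
      _ ≤ (m - s).choose n * 2 ^ (n + s) := by
          gcongr; exact_mod_cast Nat.choose_le_two_pow _ _
      _ ≤ _ := by
          gcongr
          exact two_pow_add_le_exp (by linarith) (by linarith) (by linarith)

theorem exp_neg_le_choose_sub_div_choose {d : ℝ} (h : n + s ≤ m) (hd : 0 < d)
    (hdle : d ≤ m - s + 1) :
    exp (-(n * (2 * s + n) / d)) ≤ ((m - s).choose n : ℝ) / m.choose n := by
  have hpos : (0 : ℝ) < m.choose n := by exact_mod_cast Nat.choose_pos (by omega)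
  rw [le_div_iff₀ hpos, exp_neg, ← div_eq_inv_mul, div_le_iff₀ (exp_pos _)]
  refine (choose_le_choose_sub_mul_exp h).trans
    (mul_le_mul_of_nonneg_left (exp_le_exp.2 ?_) (Nat.cast_nonneg _))
  exact div_le_div_of_nonneg_left (by positivity) hd hdle

end Binomial

section PrefixProd

variable {M : Type*} [CommMonoid M] {k : ℕ}

@[to_additive]
def prefixProd (f : Fin k → M) (r : ℕ) : M :=
  ∏ p ∈ univ.filter (fun p : Fin k => (p : ℕ) < r), f p

@[to_additive]
theorem prefixProd_zero (f : Fin k → M) : prefixProd f 0 = 1 := by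
  simp [prefixProd]

@[to_additive]
theorem prefixProd_succ (f : Fin k → M) {r : ℕ} (hr : r < k) :
    prefixProd f (r + 1) = prefixProd f r * f ⟨r, hr⟩ := by
  have : univ.filter (fun p : Fin k => (p : ℕ) < r + 1) =
      insert ⟨r, hr⟩ (univ.filter fun p : Fin k => (p : ℕ) < r) := by
    ext p; simp only [mem_filter, mem_univ, true_and, mem_insert, Fin.ext_iff]; omega
  rw [prefixProd, this, prod_insert (by simp), mul_comm, prefixProd]

@[to_additive]
theorem prefixProd_of_le (f : Fin k → M) {r : ℕ} (hr : k ≤ r) :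
    prefixProd f r = ∏ p, f p := by
  rw [prefixProd, filter_true_of_mem fun p _ => p.isLt.trans_le hr]


theorem prefixSum_le_prefixSum (f : Fin k → ℕ) {r r' : ℕ} (h : r ≤ r') :
    prefixSum f r ≤ prefixSum f r' :=
  sum_le_sum_of_subset fun p hp => by simp at hp ⊢; omega

theorem prefixSum_add_le_sum (f : Fin k → ℕ) (p : Fin k) :
    prefixSum f p + f p ≤ ∑ q, f q := by
  rw [← prefixSum_succ f p.isLt, ← prefixSum_of_le f le_rfl]
  exact prefixSum_le_prefixSum f p.isLt

theorem prefixSum_mul_two_mul_prefixSum_add (f : Fin k → ℝ) {r : ℕ} (hr : r ≤ k) :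
    prefixSum (fun p => f p * (2 * prefixSum f p + f p)) r = prefixSum f r ^ 2 := by
  induction r with
  | zero => simp [prefixSum_zero]
  | succ r ih =>
    rw [prefixSum_succ _ hr, prefixSum_succ _ hr, ih (by omega)]
    ring

end PrefixProd

section Bound

open Real

theorem exp_neg_le_prod_choose_div_choose {k m : ℕ} (c : Fin k → ℕ) (hsum : ∑ p, c p ≤ m)
    (hd : 0 < (m : ℝ) - prefixSum (fun p => (c p : ℝ)) (k - 1) + 1) :
    exp (-((k : ℝ) ^ 2 * ((univ.sup c : ℕ) : ℝ) ^ 2) /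
        ((m : ℝ) - prefixSum (fun p => (c p : ℝ)) (k - 1) + 1)) ≤
      ∏ p : Fin k, ((m - prefixSum c p).choose (c p) : ℝ) / m.choose (c p) := by
  set c' : Fin k → ℝ := fun p => (c p : ℝ)
  set d := (m : ℝ) - prefixSum c' (k - 1) + 1
  have hcast : ∀ r, ((prefixSum c r : ℕ) : ℝ) = prefixSum c' r := fun r => by
    simp [prefixSum, c']
  have hfactor : ∀ p : Fin k, exp (-(c' p * (2 * prefixSum c' p + c' p) / d)) ≤
      ((m - prefixSum c p).choose (c p) : ℝ) / m.choose (c p) := by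
    intro p
    have hle : prefixSum c p ≤ prefixSum c (k - 1) :=
      prefixSum_le_prefixSum c (show (p : ℕ) ≤ k - 1 by omega)
    have hdle : d ≤ m - prefixSum c p + 1 := by
      have : ((prefixSum c p : ℕ) : ℝ) ≤ prefixSum c (k - 1) := by exact_mod_cast hle
      rw [hcast (k - 1)] at this
      linarith
    simpa only [hcast] using exp_neg_le_choose_sub_div_choose
      ((add_comm _ _).trans_le ((prefixSum_add_le_sum c p).trans hsum)) hd hdle
  have hsq : (∑ p, c' p) ^ 2 ≤ (k : ℝ) ^ 2 * ((univ.sup c : ℕ) : ℝ) ^ 2 := by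
    have : ∑ p, c' p ≤ k * univ.sup c := by
      simpa using sum_le_card_nsmul univ c' _ fun p hp => Nat.cast_le.2 (le_sup hp)
    rw [← mul_pow]
    exact pow_le_pow_left₀ (sum_nonneg fun p _ => Nat.cast_nonneg _) this 2
  calc exp (-((k : ℝ) ^ 2 * ((univ.sup c : ℕ) : ℝ) ^ 2) / d)
        ≤ exp (-(∑ p, c' p) ^ 2 / d) := by gcongr
    _ = ∏ p : Fin k, exp (-(c' p * (2 * prefixSum c' p + c' p) / d)) := by
        rw [← exp_sum, ← prefixSum_of_le _ le_rfl,
          ← prefixSum_mul_two_mul_prefixSum_add _ le_rfl, prefixSum_of_le _ le_rfl]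
        simp only [neg_div, sum_div, sum_neg_distrib]
    _ ≤ _ := prod_le_prod (fun p _ => (exp_pos _).le) fun p _ => hfactor p

theorem ofReal_prod_natCast_div {ι : Type*} (s : Finset ι) (a b : ι → ℕ)
    (hb : ∀ i ∈ s, b i ≠ 0) :
    ENNReal.ofReal (∏ i ∈ s, (a i : ℝ) / b i) = ∏ i ∈ s, (a i : ℝ≥0∞) / b i := by
  rw [ENNReal.ofReal_prod_of_nonneg fun i _ => by positivity]
  refine prod_congr rfl fun i hi => ?_
  rw [ENNReal.ofReal_div_of_pos (Nat.cast_pos.2 (Nat.pos_of_ne_zero (hb i hi))),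
    ENNReal.ofReal_natCast, ENNReal.ofReal_natCast]

end Bound

section Favorite

variable {A B : Type*} [DecidableEq A] [DecidableEq B]

/-- A profile `u` gives agent `i` the utility `u (i, j)` for item `j`. -/
def favoriteSet (Np : Finset A) (T : Finset B) : Set (A × B → ℝ) :=
  {u | ∀ T' : Finset B, T'.card = Np.card → T' ≠ T →
    vval (Function.curry u) Np T' < vval (Function.curry u) Np T}

theorem measurableSet_favoriteSet [Fintype B] (Np : Finset A) (T : Finset B) :
    MeasurableSet (favoriteSet Np T) := by
  have : favoriteSet Np T = ⋂ T' ∈ {T' : Finset B | T'.card = Np.card ∧ T' ≠ T},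
      {u | vval (Function.curry u) Np T' < vval (Function.curry u) Np T} := by
    ext u; simp [favoriteSet]
  rw [this]
  exact MeasurableSet.biInter (Set.to_countable _) fun T' _ =>
    measurableSet_lt (measurable_vval_curry Np T') (measurable_vval_curry Np T)

theorem disjoint_favoriteSet {Np : Finset A} {T T' : Finset B} (hT : T.card = Np.card)
    (hT' : T'.card = Np.card) (hne : T ≠ T') : Disjoint (favoriteSet Np T) (favoriteSet Np T') :=
  Set.disjoint_left.2 fun _ h h' => (h T' hT' hne.symm).not_gt (h' T hT hne)

theorem dependsOn_favoriteSet (Np : Finset A) (T : Finset B) :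
    DependsOn (· ∈ favoriteSet Np T) {e | e.1 ∈ Np} := by
  intro u u' h
  have hv : ∀ S, vval (Function.curry u) Np S = vval (Function.curry u') Np S := fun S =>
    vval_congr fun i hi j _ => h (i, j) hi
  simp only [favoriteSet, Set.mem_ofPred_eq, hv]

theorem preimage_favoriteSet_perm (Np : Finset A) (T : Finset B) (σ : Equiv.Perm B) :
    (fun u e => u (e.1, σ e.2)) ⁻¹' favoriteSet Np T =
      favoriteSet Np (T.map σ.toEmbedding) := by
  ext u
  have hv : ∀ S, vval (Function.curry fun e => u (e.1, σ e.2)) Np S =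
      vval (Function.curry u) Np (S.map σ.toEmbedding) := fun S =>
    vval_comp_equiv (w := Function.curry u) σ S
  simp only [Set.mem_preimage, favoriteSet, Set.mem_ofPred_eq, hv]
  constructor
  · intro h T' hT' hne
    have := h (T'.map σ.symm.toEmbedding) (by simpa using hT') fun h' =>
      hne (by simp [← h', Finset.map_map])
    simpa [Finset.map_map] using this
  · intro h T' hT' hne
    exact h _ (by simpa using hT') fun h' => hne (map_injective _ h')

end Favorite

section FavoriteMeasure

variable {A B : Type*} [Fintype A] [Fintype B] [DecidableEq A] [DecidableEq B]
  (D : Measure ℝ) [IsProbabilityMeasure D] {Np : Finset A}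

theorem measure_favoriteSet_eq_of_card_eq {T T' : Finset B} (h : T.card = T'.card) :
    Measure.pi (fun _ : A × B => D) (favoriteSet Np T) =
      Measure.pi (fun _ : A × B => D) (favoriteSet Np T') := by
  obtain ⟨σ, rfl⟩ := exists_perm_map_eq h
  have hmp := measurePreserving_pi_comp_perm D (Equiv.prodCongr (Equiv.refl A) σ)
  rw [← preimage_favoriteSet_perm,
    ← hmp.measure_preimage (measurableSet_favoriteSet Np T).nullMeasurableSet]
  rfl

theorem ae_mem_biUnion_favoriteSet (hpos : ∀ᵐ x ∂D, 0 < x) (hatom : ∀ x, D {x} = 0)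
    (hcard : Np.card ≤ Fintype.card B) :
    ∀ᵐ u ∂Measure.pi (fun _ : A × B => D),
      u ∈ ⋃ T ∈ powersetCard Np.card univ, favoriteSet Np T := by
  have hpos' : ∀ᵐ u ∂Measure.pi (fun _ : A × B => D), ∀ e, 0 < u e :=
    ae_all_iff.2 fun e => (measurePreserving_eval _ e).quasiMeasurePreserving.ae hpos
  filter_upwards [hpos', ae_injective_sum fun _ => hatom] with u hu hinj
  obtain ⟨T, hT, hbest⟩ := exists_forall_vval_lt (w := Function.curry u) (Np := Np)
    (fun i j => hu (i, j)) hinj hcard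
  exact Set.mem_biUnion (mem_powersetCard_univ.2 hT) hbest

/-- The `C(|B|, |Np|)` events `favoriteSet Np T` are disjoint, cover almost everything, and are
equiprobable since permuting the items preserves the product measure. -/
theorem measure_favoriteSet (hpos : ∀ᵐ x ∂D, 0 < x) (hatom : ∀ x, D {x} = 0)
    (hcard : Np.card ≤ Fintype.card B) {T : Finset B} (hT : T.card = Np.card) :
    Measure.pi (fun _ : A × B => D) (favoriteSet Np T) =
      ((Fintype.card B).choose Np.card : ℝ≥0∞)⁻¹ := by
  have hdisj : (powersetCard Np.card (univ : Finset B) : Set (Finset B)).PairwiseDisjoint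
      (favoriteSet Np) := fun T₁ h₁ T₂ h₂ hne =>
    disjoint_favoriteSet (mem_powersetCard_univ.1 h₁) (mem_powersetCard_univ.1 h₂) hne
  have hmeas : MeasurableSet (⋃ T ∈ powersetCard Np.card (univ : Finset B), favoriteSet Np T) :=
    Finset.measurableSet_biUnion _ fun T _ => measurableSet_favoriteSet Np T
  have hone := (ae_mem_iff_measure_eq hmeas.nullMeasurableSet).1
    (ae_mem_biUnion_favoriteSet D hpos hatom hcard)
  rw [measure_univ, measure_biUnion_finset hdisj fun T _ => measurableSet_favoriteSet Np T,
    sum_congr rfl fun T' hT' => measure_favoriteSet_eq_of_card_eq D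
      ((mem_powersetCard_univ.1 hT').trans hT.symm), sum_const, card_powersetCard, card_univ,
    nsmul_eq_mul] at hone
  exact ENNReal.eq_inv_of_mul_eq_one_left (by rwa [mul_comm])

end FavoriteMeasure

section DisjointBundles

variable {A B : Type*} [Fintype B] {k : ℕ} (cls : Fin k → Finset A)

open scoped Classical in
/-- Bundles for the classes `p < r`; the classes `p ≥ r` get `∅`, so that a tuple for `r + 1` is
a tuple for `r` updated at `r`. -/
noncomputable def disjointBundles (r : ℕ) : Finset (Fin k → Finset B) :=
  univ.filter fun T => (∀ p : Fin k, (p : ℕ) < r → (T p).card = (cls p).card) ∧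
    (∀ p : Fin k, r ≤ (p : ℕ) → T p = ∅) ∧ Pairwise fun p q => Disjoint (T p) (T q)

abbrev availableBundles [DecidableEq B] {r : ℕ} (hr : r < k) (T : Fin k → Finset B) :
    Finset (Finset B) :=
  powersetCard (cls ⟨r, hr⟩).card (univ \ univ.biUnion T)

variable {cls}

theorem mem_disjointBundles {r : ℕ} {T : Fin k → Finset B} :
    T ∈ disjointBundles cls r ↔ (∀ p : Fin k, (p : ℕ) < r → (T p).card = (cls p).card) ∧
      (∀ p : Fin k, r ≤ (p : ℕ) → T p = ∅) ∧
      Pairwise fun p q => Disjoint (T p) (T q) := by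
  classical
  simp [disjointBundles]

theorem disjointBundles_zero : disjointBundles (B := B) cls 0 = {fun _ => ∅} := by
  ext T
  simp only [mem_disjointBundles, mem_singleton, Nat.not_lt_zero, false_imp_iff, implies_true,
    zero_le, forall_const, true_and, funext_iff]
  exact ⟨fun h => h.1, fun h => ⟨h, fun p q _ => by simp [h]⟩⟩

section Succ

variable [DecidableEq B] {r : ℕ} (hr : r < k)

theorem update_mem_disjointBundles_succ {T : Fin k → Finset B} (hT : T ∈ disjointBundles cls r)
    {S : Finset B} (hS : S ∈ availableBundles cls hr T) :
    Function.update T ⟨r, hr⟩ S ∈ disjointBundles cls (r + 1) := by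
  obtain ⟨hcard, hempty, hdisj⟩ := mem_disjointBundles.1 hT
  simp only [mem_powersetCard, subset_sdiff, subset_univ, true_and, disjoint_biUnion_right,
    mem_univ, forall_const] at hS
  refine mem_disjointBundles.2 ⟨fun p hp => ?_, fun p hp => ?_, fun p p' hpp' => ?_⟩
  · by_cases hpq : p = ⟨r, hr⟩
    · subst hpq; simpa using hS.2
    · rw [Function.update_of_ne hpq]
      exact hcard p (by have : (p : ℕ) ≠ r := fun h => hpq (Fin.ext h); omega)
  · have hpq : p ≠ ⟨r, hr⟩ := by rintro rfl; simp at hp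
    rw [Function.update_of_ne hpq]; exact hempty p (by omega)
  · by_cases hpq : p = ⟨r, hr⟩ <;> by_cases hpq' : p' = ⟨r, hr⟩
    · exact absurd (hpq.trans hpq'.symm) hpp'
    · subst hpq; simpa [Function.update_of_ne hpq'] using hS.1 p'
    · subst hpq'; simpa [Function.update_of_ne hpq] using (hS.1 p).symm
    · simpa [Function.update_of_ne hpq, Function.update_of_ne hpq'] using hdisj hpp'

theorem update_empty_mem_disjointBundles {T : Fin k → Finset B}
    (hT : T ∈ disjointBundles cls (r + 1)) :
    Function.update T ⟨r, hr⟩ ∅ ∈ disjointBundles cls r ∧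
      T ⟨r, hr⟩ ∈ availableBundles cls hr (Function.update T ⟨r, hr⟩ ∅) := by
  obtain ⟨hcard, hempty, hdisj⟩ := mem_disjointBundles.1 hT
  simp only [mem_powersetCard, subset_sdiff, subset_univ, true_and, disjoint_biUnion_right,
    mem_univ, forall_const]
  refine ⟨mem_disjointBundles.2 ⟨fun p hp => ?_, fun p hp => ?_, fun p p' hpp' => ?_⟩,
    fun p => ?_, hcard _ (by simp)⟩
  · rw [Function.update_of_ne (by rintro rfl; simp at hp)]; exact hcard p (by omega)
  · by_cases hpq : p = ⟨r, hr⟩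
    · simp [hpq]
    · rw [Function.update_of_ne hpq]
      exact hempty p (by have : (p : ℕ) ≠ r := fun h => hpq (Fin.ext h); omega)
  · exact (hdisj hpp').mono (by by_cases p = ⟨r, hr⟩ <;> simp_all)
      (by by_cases p' = ⟨r, hr⟩ <;> simp_all)
  · by_cases hpq : p = ⟨r, hr⟩
    · simp [hpq]
    · rw [Function.update_of_ne hpq]; exact hdisj (Ne.symm hpq)

theorem card_availableBundles {T : Fin k → Finset B} (hT : T ∈ disjointBundles cls r) :
    (availableBundles cls hr T).card =
      (Fintype.card B - prefixSum (fun p => (cls p).card) r).choose (cls ⟨r, hr⟩).card := by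
  obtain ⟨hcard, hempty, hdisj⟩ := mem_disjointBundles.1 hT
  have hsum : ∑ p, (T p).card = prefixSum (fun p => (cls p).card) r := by
    have hsupp : ∀ p ∈ univ, (T p).card ≠ 0 → (p : ℕ) < r := fun p _ hp => by
      by_contra h
      exact hp (by rw [hempty p (not_lt.1 h), card_empty])
    rw [prefixSum, ← sum_filter_of_ne hsupp]
    exact sum_congr rfl fun p hp => hcard p (mem_filter.1 hp).2
  rw [card_powersetCard, ← compl_eq_univ_sdiff, card_compl,
    card_biUnion fun p _ q _ hpq => hdisj hpq, hsum]

theorem sum_disjointBundles_succ {M : Type*} [AddCommMonoid M] (F : (Fin k → Finset B) → M) :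
    ∑ T ∈ disjointBundles cls (r + 1), F T = ∑ T ∈ disjointBundles cls r,
      ∑ S ∈ availableBundles cls hr T, F (Function.update T ⟨r, hr⟩ S) := by
  rw [sum_sigma']
  refine sum_nbij' (fun T => ⟨Function.update T ⟨r, hr⟩ ∅, T ⟨r, hr⟩⟩)
    (fun x => Function.update x.1 ⟨r, hr⟩ x.2) (fun T hT => ?_)
    (fun x hx => update_mem_disjointBundles_succ hr (mem_sigma.1 hx).1 (mem_sigma.1 hx).2)
    (fun T _ => by simp) (fun x hx => ?_) (fun T _ => by simp)
  · exact mem_sigma.2 (update_empty_mem_disjointBundles hr hT)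
  · have hx0 : x.1 ⟨r, hr⟩ = ∅ := (mem_disjointBundles.1 (mem_sigma.1 hx).1).2.1 _ (by simp)
    simp [← hx0]

end Succ

end DisjointBundles

section FavoriteTuple

variable {A B : Type*} [DecidableEq A] [DecidableEq B] {k : ℕ} {cls : Fin k → Finset A}

variable (cls) in
def favoriteTupleSet (r : ℕ) (T : Fin k → Finset B) : Set (A × B → ℝ) :=
  {u | ∀ p : Fin k, (p : ℕ) < r → u ∈ favoriteSet (cls p) (T p)}

theorem measurableSet_favoriteTupleSet [Fintype B] (r : ℕ) (T : Fin k → Finset B) :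
    MeasurableSet (favoriteTupleSet cls r T) := by
  have : favoriteTupleSet cls r T =
      ⋂ p ∈ {p : Fin k | (p : ℕ) < r}, favoriteSet (cls p) (T p) := by
    ext u; simp [favoriteTupleSet]
  rw [this]
  exact MeasurableSet.biInter (Set.to_countable _) fun p _ => measurableSet_favoriteSet _ _

theorem dependsOn_favoriteTupleSet (r : ℕ) (T : Fin k → Finset B) :
    DependsOn (· ∈ favoriteTupleSet cls r T)
      {e | ∃ p : Fin k, (p : ℕ) < r ∧ e.1 ∈ cls p} := by
  intro u u' h
  simp only [favoriteTupleSet, Set.mem_ofPred_eq]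
  refine forall_congr fun p => forall_congr fun hp => ?_
  exact dependsOn_favoriteSet (cls p) (T p) fun e he => h e ⟨p, hp, he⟩

theorem favoriteTupleSet_succ_update {r : ℕ} (hr : r < k) (T : Fin k → Finset B)
    (S : Finset B) :
    favoriteTupleSet cls (r + 1) (Function.update T ⟨r, hr⟩ S) =
      favoriteTupleSet cls r T ∩ favoriteSet (cls ⟨r, hr⟩) S := by
  ext u
  simp only [favoriteTupleSet, Set.mem_inter_iff, Set.mem_ofPred_eq]
  constructor
  · intro h
    refine ⟨fun p hp => ?_, by simpa using h ⟨r, hr⟩ (by simp)⟩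
    have hne : p ≠ ⟨r, hr⟩ := fun h => by simp [h] at hp
    simpa [Function.update_of_ne hne] using h p (by omega)
  · rintro ⟨h, hS⟩ p hp
    rcases (Nat.lt_succ_iff_lt_or_eq.1 hp) with hp | hp
    · have hne : p ≠ ⟨r, hr⟩ := fun h => by simp [h] at hp
      simpa [Function.update_of_ne hne] using h p hp
    · obtain rfl : p = ⟨r, hr⟩ := Fin.ext hp
      simpa using hS

theorem disjoint_favoriteTupleSet [Fintype B] {r : ℕ} {T T' : Fin k → Finset B}
    (hT : T ∈ disjointBundles cls r) (hT' : T' ∈ disjointBundles cls r) (hne : T ≠ T') :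
    Disjoint (favoriteTupleSet cls r T) (favoriteTupleSet cls r T') := by
  obtain ⟨p, hp⟩ := Function.ne_iff.1 hne
  have hpr : (p : ℕ) < r := by
    by_contra h
    rw [(mem_disjointBundles.1 hT).2.1 p (not_lt.1 h),
      (mem_disjointBundles.1 hT').2.1 p (not_lt.1 h)] at hp
    exact hp rfl
  exact (disjoint_favoriteSet ((mem_disjointBundles.1 hT).1 p hpr)
    ((mem_disjointBundles.1 hT').1 p hpr) hp).mono (fun u hu => hu p hpr) fun u hu => hu p hpr

theorem exists_disjoint_favorites [Fintype B] {T : Fin k → Finset B}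
    (hT : T ∈ disjointBundles cls k) {u : A × B → ℝ} (hu : u ∈ favoriteTupleSet cls k T) :
    ∃ Ib : Fin k → Finset B, (∀ p q : Fin k, p ≠ q → Disjoint (Ib p) (Ib q)) ∧
      ∀ p, (Ib p).card = (cls p).card ∧ ∀ I' : Finset B, I'.card = (cls p).card →
        vval (Function.curry u) (cls p) I' ≤ vval (Function.curry u) (cls p) (Ib p) := by
  obtain ⟨hcard, -, hdisj⟩ := mem_disjointBundles.1 hT
  refine ⟨T, fun p q hpq => hdisj hpq, fun p => ⟨hcard p p.isLt, fun I' hI' => ?_⟩⟩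
  rcases eq_or_ne I' (T p) with rfl | hne
  · exact le_rfl
  · exact (hu p p.isLt I' hI' hne).le

end FavoriteTuple

section FavoriteTupleMeasure

variable {A B : Type*} [Fintype A] [Fintype B] [DecidableEq A] [DecidableEq B] {k : ℕ}
  {cls : Fin k → Finset A} (D : Measure ℝ) [IsProbabilityMeasure D]

theorem measure_favoriteTupleSet_succ_update
    (hcls : Pairwise fun p q => Disjoint (cls p) (cls q)) (hpos : ∀ᵐ x ∂D, 0 < x)
    (hatom : ∀ x, D {x} = 0) {r : ℕ} (hr : r < k)
    (hcard : (cls ⟨r, hr⟩).card ≤ Fintype.card B) (T : Fin k → Finset B) {S : Finset B}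
    (hS : S.card = (cls ⟨r, hr⟩).card) :
    Measure.pi (fun _ : A × B => D)
        (favoriteTupleSet cls (r + 1) (Function.update T ⟨r, hr⟩ S)) =
      Measure.pi (fun _ : A × B => D) (favoriteTupleSet cls r T) *
        ((Fintype.card B).choose (cls ⟨r, hr⟩).card : ℝ≥0∞)⁻¹ := by
  have hsub : {e : A × B | e.1 ∈ cls ⟨r, hr⟩} ⊆
      {e | ∃ p : Fin k, (p : ℕ) < r ∧ e.1 ∈ cls p}ᶜ := by
    rintro e he ⟨p, hp, hep⟩
    exact disjoint_left.1 (hcls (show p ≠ ⟨r, hr⟩ from fun h => by simp [h] at hp)) hep he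
  rw [favoriteTupleSet_succ_update, measure_pi_inter_eq_mul_of_dependsOn _
    (measurableSet_favoriteTupleSet r T) (measurableSet_favoriteSet _ S)
    (dependsOn_favoriteTupleSet r T) ((dependsOn_favoriteSet _ S).mono hsub),
    measure_favoriteSet D hpos hatom hcard hS]

theorem sum_measure_favoriteTupleSet (hcls : Pairwise fun p q => Disjoint (cls p) (cls q))
    (hpos : ∀ᵐ x ∂D, 0 < x) (hatom : ∀ x, D {x} = 0)
    (hcard : ∀ p, (cls p).card ≤ Fintype.card B) {r : ℕ} (hr : r ≤ k) :
    ∑ T ∈ disjointBundles cls r, Measure.pi (fun _ : A × B => D) (favoriteTupleSet cls r T) =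
      prefixProd (fun p => ((Fintype.card B - prefixSum (fun q => (cls q).card) p).choose
        (cls p).card : ℝ≥0∞) / (Fintype.card B).choose (cls p).card) r := by
  induction r with
  | zero => simp [disjointBundles_zero, favoriteTupleSet, prefixProd_zero]
  | succ r ih =>
    have hr' : r < k := hr
    rw [sum_disjointBundles_succ hr', prefixProd_succ _ hr', ← ih hr'.le, sum_mul]
    refine sum_congr rfl fun T hT => ?_
    rw [sum_congr rfl fun S hS => measure_favoriteTupleSet_succ_update D hcls hpos hatom hr'
      (hcard _) T (mem_powersetCard.1 hS).2, sum_const, card_availableBundles hr' hT,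
      nsmul_eq_mul, ENNReal.div_eq_inv_mul]
    ring

theorem measure_biUnion_favoriteTupleSet
    (hcls : Pairwise fun p q => Disjoint (cls p) (cls q)) (hpos : ∀ᵐ x ∂D, 0 < x)
    (hatom : ∀ x, D {x} = 0) (hcard : ∀ p, (cls p).card ≤ Fintype.card B) :
    Measure.pi (fun _ : A × B => D) (⋃ T ∈ disjointBundles cls k, favoriteTupleSet cls k T) =
      ∏ p : Fin k, ((Fintype.card B - prefixSum (fun q => (cls q).card) p).choose
        (cls p).card : ℝ≥0∞) / (Fintype.card B).choose (cls p).card := by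
  rw [measure_biUnion_finset (fun T hT T' hT' hne => disjoint_favoriteTupleSet hT hT' hne)
    fun T _ => measurableSet_favoriteTupleSet k T,
    sum_measure_favoriteTupleSet D hcls hpos hatom hcard le_rfl, prefixProd_of_le _ le_rfl]

end FavoriteTupleMeasure

end ClassEF

open MeasureTheory ProbabilityTheory in
/-- with independent utilities drawn from a non-atomic distribution,
the probability that there exist pairwise disjoint favorite bundles, one per class,
is at least `exp(−k²·(max_p n_p)² / (m − Σ_{p=1}^{k-1} n_p + 1))`. -/
theorem stmt4 {n m k : ℕ} (cls : Fin k → Finset (Fin n))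
    (hpart : ClassEF.IsClassPartition cls)
    (D : Measure ℝ) [IsProbabilityMeasure D]
    (hsupp : D ((Set.Icc (0 : ℝ) 1)ᶜ) = 0)
    (hatom : ∀ x : ℝ, D {x} = 0)
    {Ω : Type} [MeasurableSpace Ω] (μ : Measure Ω) [IsProbabilityMeasure μ]
    (U : Fin n × Fin m → Ω → ℝ)
    (hmeas : ∀ e, Measurable (U e))
    (hdist : ∀ e, μ.map (U e) = D)
    (hindep : iIndepFun (m := fun _ => (inferInstance : MeasurableSpace ℝ)) U μ)
    (hsum : ∑ p : Fin k, (cls p).card ≤ m)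
    (hpos : 0 < (m : ℝ) -
      (∑ p ∈ Finset.univ.filter (fun p : Fin k => (p : ℕ) < k - 1), ((cls p).card : ℝ)) + 1) :
    ENNReal.ofReal
        (Real.exp (-((k : ℝ) ^ 2 * (ClassEF.maxClassSize cls : ℝ) ^ 2) /
          ((m : ℝ) -
            (∑ p ∈ Finset.univ.filter (fun p : Fin k => (p : ℕ) < k - 1),
              ((cls p).card : ℝ)) + 1))) ≤
      μ {ω | ∃ Ib : Fin k → Finset (Fin m),
        (∀ p q : Fin k, p ≠ q → Disjoint (Ib p) (Ib q)) ∧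
        ∀ p, (Ib p).card = (cls p).card ∧
          ∀ I' : Finset (Fin m), I'.card = (cls p).card →
            ClassEF.vval (fun i j => U (i, j) ω) (cls p) I' ≤
              ClassEF.vval (fun i j => U (i, j) ω) (cls p) (Ib p)} := by
  open ClassEF Finset in
  have hcard : ∀ p, (cls p).card ≤ m := fun p =>
    (single_le_sum (fun q _ => Nat.zero_le _) (mem_univ p)).trans hsum
  have hmap : μ.map (fun ω e => U e ω) = Measure.pi fun _ => D := by
    rw [(iIndepFun_iff_map_fun_eq_pi_map fun e => (hmeas e).aemeasurable).1 hindep]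
    simp_rw [hdist]
  have hprob := measure_biUnion_favoriteTupleSet (B := Fin m) D hpart.2.1
    (ae_pos_of_measure_compl_Icc hsupp (hatom 0)) hatom
    fun p => (hcard p).trans_eq (Fintype.card_fin m).symm
  simp only [Fintype.card_fin] at hprob
  calc _ ≤ ENNReal.ofReal (∏ p : Fin k, ((m - prefixSum (fun q => (cls q).card) p).choose
          (cls p).card : ℝ) / m.choose (cls p).card) :=
        ENNReal.ofReal_le_ofReal (exp_neg_le_prod_choose_div_choose _ hsum hpos)
    _ = μ ((fun ω e => U e ω) ⁻¹'
          ⋃ T ∈ disjointBundles cls k, favoriteTupleSet cls k T) := by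
        rw [ofReal_prod_natCast_div _ _ _ fun p _ => (Nat.choose_pos (hcard p)).ne', ← hprob,
          ← hmap, Measure.map_apply (measurable_pi_lambda _ hmeas)
            (Finset.measurableSet_biUnion _ fun T _ => measurableSet_favoriteTupleSet k T)]
    _ ≤ _ := measure_mono fun ω hω => by
        obtain ⟨T, hT, hu⟩ := Set.mem_iUnion₂.1 hω
        exact exists_disjoint_favorites hT hu
end

section
/- Fix a non-atomic distribution D on [0,1] and a constant c > 0. Consider instances in which each utility u_i(j) is drawn independently from D and m / log m ≥ c·(k²·max_{p∈[k]} n_p)². Then for every ε > 0 there exists M₀ such that for every such instance with m ≥ M₀, the probability that every maximum-weight matching in G is class envy-free is at least 1 − ε. -/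
open MeasureTheory ProbabilityTheory Filter
open scoped ENNReal

namespace Stmt5Aux

open Finset MeasureTheory ProbabilityTheory
open scoped ENNReal

variable {n m : ℕ}

/-- Any matching whose left endpoints lie in `s` has weight at most the sum over `s` of
the per-agent maxima. -/
lemma weightSum_le (w : Fin n → Fin m → ℝ) (h0 : ∀ i j, 0 ≤ w i j)
    (t : Fin n → Fin m) (ht : ∀ i j, w i j ≤ w i (t i))
    {M : Finset (Fin n × Fin m)} (hM : ClassEF.IsMatching M)
    {s : Finset (Fin n)} (hs : ∀ e ∈ M, e.1 ∈ s) :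
    ClassEF.weightSum w M ≤ ∑ i ∈ s, w i (t i) := by
  calc ClassEF.weightSum w M = ∑ e ∈ M, w e.1 e.2 := rfl
    _ ≤ ∑ e ∈ M, w e.1 (t e.1) := Finset.sum_le_sum (fun e _ => ht e.1 e.2)
    _ = ∑ i ∈ M.image Prod.fst, w i (t i) :=
        (Finset.sum_image (f := fun i => w i (t i)) hM.1).symm
    _ ≤ ∑ i ∈ s, w i (t i) := by
        refine Finset.sum_le_sum_of_subset_of_nonneg ?_ (fun i _ _ => h0 i (t i))
        intro i hi
        obtain ⟨e, he, rfl⟩ := Finset.mem_image.mp hi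
        exact hs e he

/-- If all weights are positive, each row has a strict favorite, and the favorites are
pairwise distinct, then the unique maximum-weight matching assigns every agent their
favorite item. -/
lemma mwm_eq (w : Fin n → Fin m → ℝ) (h1 : ∀ i j, 0 < w i j)
    (t : Fin n → Fin m) (ht : ∀ i j, w i j ≤ w i (t i))
    (hstrict : ∀ i j, j ≠ t i → w i j < w i (t i))
    (htinj : Function.Injective t)
    {M : Finset (Fin n × Fin m)} (hM : ClassEF.IsMaxWeightMatching w M) :
    M = Finset.univ.image (fun i => (i, t i)) := by
  set Mstar := Finset.univ.image (fun i : Fin n => (i, t i)) with hMstar_def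
  have hstar_inj : ∀ x ∈ (Finset.univ : Finset (Fin n)), ∀ y ∈ (Finset.univ : Finset (Fin n)),
      (fun i => (i, t i)) x = (fun i => (i, t i)) y → x = y := by
    intro x _ y _ h
    exact congrArg Prod.fst h
  have hMstar_matching : ClassEF.IsMatching Mstar := by
    constructor
    · intro e he e' he' h
      obtain ⟨i, _, rfl⟩ := Finset.mem_image.mp he
      obtain ⟨i', _, rfl⟩ := Finset.mem_image.mp he'
      simp only at h
      simp [h]
    · intro e he e' he' h
      obtain ⟨i, _, rfl⟩ := Finset.mem_image.mp he
      obtain ⟨i', _, rfl⟩ := Finset.mem_image.mp he'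
      simp only at h
      simp [htinj h]
  have hwstar : ClassEF.weightSum w Mstar = ∑ i : Fin n, w i (t i) :=
    Finset.sum_image hstar_inj
  have hub1 : ClassEF.weightSum w M ≤ ∑ e ∈ M, w e.1 (t e.1) :=
    Finset.sum_le_sum (fun e _ => ht e.1 e.2)
  have hub2 : ∑ e ∈ M, w e.1 (t e.1) = ∑ i ∈ M.image Prod.fst, w i (t i) :=
    (Finset.sum_image (f := fun i => w i (t i)) hM.1.1).symm
  have hsub : M.image Prod.fst ⊆ Finset.univ := Finset.subset_univ _
  have hub3 : ∑ i ∈ M.image Prod.fst, w i (t i) ≤ ∑ i : Fin n, w i (t i) :=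
    Finset.sum_le_sum_of_subset_of_nonneg hsub (fun i _ _ => (h1 i (t i)).le)
  have hge : ∑ i : Fin n, w i (t i) ≤ ClassEF.weightSum w M := by
    rw [← hwstar]; exact hM.2 Mstar hMstar_matching
  have heqA : ClassEF.weightSum w M = ∑ e ∈ M, w e.1 (t e.1) := by
    refine le_antisymm hub1 ?_
    calc ∑ e ∈ M, w e.1 (t e.1) = ∑ i ∈ M.image Prod.fst, w i (t i) := hub2
      _ ≤ ∑ i : Fin n, w i (t i) := hub3
      _ ≤ ClassEF.weightSum w M := hge
  have heqC : ∑ i ∈ M.image Prod.fst, w i (t i) = ∑ i : Fin n, w i (t i) := by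
    refine le_antisymm hub3 ?_
    calc ∑ i : Fin n, w i (t i) ≤ ClassEF.weightSum w M := hge
      _ ≤ ∑ e ∈ M, w e.1 (t e.1) := hub1
      _ = ∑ i ∈ M.image Prod.fst, w i (t i) := hub2
  have hfav : ∀ e ∈ M, e.2 = t e.1 := by
    intro e he
    by_contra hne
    have hlt : ClassEF.weightSum w M < ∑ e ∈ M, w e.1 (t e.1) := by
      refine Finset.sum_lt_sum (fun e' _ => ht e'.1 e'.2) ⟨e, he, ?_⟩
      exact hstrict e.1 e.2 hne
    exact absurd heqA (ne_of_lt hlt)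
  have hcover : M.image Prod.fst = Finset.univ := by
    by_contra hne
    obtain ⟨i, hiu, hni⟩ : ∃ i, i ∈ (Finset.univ : Finset (Fin n)) ∧ i ∉ M.image Prod.fst := by
      by_contra h
      push_neg at h
      exact hne (Finset.eq_univ_iff_forall.mpr (fun i => h i (Finset.mem_univ i)))
    have hlt : ∑ i ∈ M.image Prod.fst, w i (t i) < ∑ i : Fin n, w i (t i) :=
      Finset.sum_lt_sum_of_subset hsub hiu hni (h1 i (t i)) (fun j _ _ => (h1 j (t j)).le)
    exact absurd heqC (ne_of_lt hlt)
  ext e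
  constructor
  · intro he
    exact Finset.mem_image.mpr ⟨e.1, Finset.mem_univ _, by
      have := hfav e he
      exact Prod.ext rfl this.symm⟩
  · intro he
    obtain ⟨i, _, rfl⟩ := Finset.mem_image.mp he
    have hiu : i ∈ M.image Prod.fst := by rw [hcover]; exact Finset.mem_univ i
    obtain ⟨e', he', he'1⟩ := Finset.mem_image.mp hiu
    have he'2 := hfav e' he'
    have : e' = (i, t i) := by
      rw [Prod.ext_iff]
      exact ⟨he'1, by rw [he'2, he'1]⟩
    rwa [← this]

/-- Under the hypotheses of `mwm_eq`, every maximum-weight matching is class envy-free. -/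
lemma cef_of_distinct_favorites (w : Fin n → Fin m → ℝ)
    (h1 : ∀ i j, 0 < w i j)
    (t : Fin n → Fin m) (ht : ∀ i j, w i j ≤ w i (t i))
    (hstrict : ∀ i j, j ≠ t i → w i j < w i (t i))
    (htinj : Function.Injective t)
    {k : ℕ} (cls : Fin k → Finset (Fin n))
    {M : Finset (Fin n × Fin m)} (hM : ClassEF.IsMaxWeightMatching w M) :
    ClassEF.ClassEnvyFree w cls M := by
  have hMeq := mwm_eq w h1 t ht hstrict htinj hM
  intro p q _
  have hutil : ClassEF.classUtil w M (cls p) = ∑ i ∈ cls p, w i (t i) := by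
    rw [ClassEF.classUtil, hMeq, Finset.filter_image]
    rw [Finset.sum_image (f := fun e : Fin n × Fin m => w e.1 e.2)
      (fun x _ y _ h => congrArg Prod.fst h)]
    refine Finset.sum_congr ?_ (fun i _ => rfl)
    ext i
    simp
  have hbound : ClassEF.vval w (cls p) (ClassEF.bundleOf M (cls q)) ≤ ∑ i ∈ cls p, w i (t i) := by
    classical
    rw [ClassEF.vval]
    refine Finset.sup'_le _ _ ?_
    intro M' hM'
    rw [Finset.mem_filter, Finset.mem_powerset] at hM'
    refine weightSum_le w (fun i j => (h1 i j).le) t ht hM'.2 ?_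
    intro e he
    exact (Finset.mem_product.mp (hM'.1 he)).1
  rw [hutil]
  exact hbound

/-- The set of tuples whose strict maximum is at coordinate `j`. -/
def topAt {m : ℕ} (j : Fin m) : Set (Fin m → ℝ) := {y | ∀ j', j' ≠ j → y j' < y j}

lemma measurableSet_topAt {m : ℕ} (j : Fin m) : MeasurableSet (topAt j) := by
  have : topAt j = ⋂ j', ⋂ (_ : j' ≠ j), {y : Fin m → ℝ | y j' < y j} := by
    ext y; simp [topAt]
  rw [this]
  exact MeasurableSet.iInter fun j' => MeasurableSet.iInter fun _ =>
    measurableSet_lt (measurable_pi_apply _) (measurable_pi_apply _)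

lemma topAt_disjoint {m : ℕ} {j j' : Fin m} (h : j ≠ j') :
    Disjoint (topAt j) (topAt j') := by
  rw [Set.disjoint_left]
  intro y hy hy'
  exact absurd (hy j' h.symm) (not_lt.mpr (hy' j h).le)

/-- Precomposition with a permutation preserves the i.i.d. product measure. -/
lemma pi_map_comp_equiv (D : Measure ℝ) [IsProbabilityMeasure D] {m : ℕ} (e : Fin m ≃ Fin m) :
    Measure.pi (fun _ : Fin m => D) =
      (Measure.pi (fun _ : Fin m => D)).map (fun y j => y (e j)) := by
  have hmeas : Measurable (fun (y : Fin m → ℝ) j => y (e j)) :=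
    measurable_pi_lambda _ fun j => measurable_pi_apply _
  refine Measure.pi_eq fun s hs => ?_
  rw [Measure.map_apply hmeas (MeasurableSet.univ_pi hs)]
  have hpre : (fun (y : Fin m → ℝ) j => y (e j)) ⁻¹' (Set.pi Set.univ s)
      = Set.pi Set.univ (fun c => s (e.symm c)) := by
    ext y
    simp only [Set.mem_preimage, Set.mem_pi, Set.mem_univ, true_implies]
    constructor
    · intro h c
      have := h (e.symm c); simpa using this
    · intro h b
      have := h (e b); simpa using this
  rw [hpre, Measure.pi_pi]
  exact (Equiv.prod_comp e.symm fun b => D (s b))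

lemma sum_measure_topAt_le (D : Measure ℝ) [IsProbabilityMeasure D] (m : ℕ) :
    ∑ j : Fin m, Measure.pi (fun _ : Fin m => D) (topAt j) ≤ 1 := by
  have hdisj : Pairwise (Function.onFun Disjoint fun j' : Fin m => topAt (m := m) j') :=
    fun _ _ hab => topAt_disjoint hab
  calc ∑ j : Fin m, Measure.pi (fun _ : Fin m => D) (topAt j)
      = Measure.pi (fun _ : Fin m => D) (⋃ j, topAt j) := by
        rw [measure_iUnion hdisj (fun j' => measurableSet_topAt j')]
        exact (tsum_fintype _).symm
    _ ≤ 1 := prob_le_one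

lemma measure_topAt_le (D : Measure ℝ) [IsProbabilityMeasure D] {m : ℕ} (j : Fin m) :
    Measure.pi (fun _ : Fin m => D) (topAt j) ≤ (m : ℝ≥0∞)⁻¹ := by
  set ν := Measure.pi (fun _ : Fin m => D) with hν
  have huni : ∀ j' : Fin m, ν (topAt j') = ν (topAt j) := by
    intro j'
    set σ := Equiv.swap j' j with hσdef
    have hσσ : ∀ x, σ (σ x) = x := fun x => Equiv.swap_apply_self _ _ _
    have hσj : σ j = j' := Equiv.swap_apply_right _ _
    have hmeas : Measurable (fun (y : Fin m → ℝ) c => y (σ c)) :=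
      measurable_pi_lambda _ fun c => measurable_pi_apply _
    have he : topAt j' = (fun (y : Fin m → ℝ) c => y (σ c)) ⁻¹' topAt j := by
      ext y
      simp only [Set.mem_preimage, topAt, Set.mem_setOf_eq]
      constructor
      · intro h c hc
        have hne : σ c ≠ j' := by
          intro hcon
          apply hc
          have h2 := congrArg σ (hcon.trans hσj.symm)
          rwa [hσσ, hσσ] at h2
        have := h _ hne
        rwa [← hσj] at this
      · intro h d hd
        have hc : σ d ≠ j := by
          intro hcon
          apply hd
          have h2 := congrArg σ hcon
          rwa [hσσ, hσj] at h2
        have := h _ hc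
        rwa [hσσ, hσj] at this
    rw [he, ← Measure.map_apply hmeas (measurableSet_topAt j)]
    rw [← pi_map_comp_equiv D σ]
  have hle1 : ν (topAt j) * (m : ℝ≥0∞) ≤ 1 := by
    have hconst : ∑ j' : Fin m, ν (topAt j') = ν (topAt j) * (m : ℝ≥0∞) := by
      rw [Finset.sum_congr rfl (fun j' _ => huni j'), Finset.sum_const, Finset.card_univ,
        Fintype.card_fin, nsmul_eq_mul, mul_comm]
    rw [← hconst]
    exact sum_measure_topAt_le D m
  exact ENNReal.le_inv_iff_mul_le.mpr hle1

end Stmt5Aux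

open MeasureTheory ProbabilityTheory in
/-- for a fixed non-atomic distribution `D` and constant `c > 0`, over
instances with `m / log m ≥ c (k² max_p n_p)²`, the probability that every
maximum-weight matching is class envy-free tends to 1 as `m → ∞`. -/
theorem stmt5 (D : Measure ℝ) [IsProbabilityMeasure D]
    (hsupp : D ((Set.Icc (0 : ℝ) 1)ᶜ) = 0)
    (hatom : ∀ x : ℝ, D {x} = 0)
    (c : ℝ) (hc : 0 < c) :
    ∀ ε > (0 : ℝ), ∃ M₀ : ℕ,
      ∀ (n m k : ℕ) (cls : Fin k → Finset (Fin n)),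
        ClassEF.IsClassPartition cls →
        M₀ ≤ m →
        c * (((k : ℝ) ^ 2 * (ClassEF.maxClassSize cls : ℝ)) ^ 2) ≤ (m : ℝ) / Real.log m →
      ∀ (Ω : Type) (_ : MeasurableSpace Ω) (μ : Measure Ω),
        IsProbabilityMeasure μ →
      ∀ U : Fin n × Fin m → Ω → ℝ,
        (∀ e, Measurable (U e)) →
        (∀ e, μ.map (U e) = D) →
        iIndepFun (m := fun _ => (inferInstance : MeasurableSpace ℝ)) U μ →
      ENNReal.ofReal (1 - ε) ≤
        μ {ω | ∀ M : Finset (Fin n × Fin m),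
          ClassEF.IsMaxWeightMatching (fun i j => U (i, j) ω) M →
          ClassEF.ClassEnvyFree (fun i j => U (i, j) ω) cls M} := by
  classical
  intro ε hε
  refine ⟨max 3 (Nat.ceil (Real.exp (1 / (c * ε))) + 1), ?_⟩
  intro n m k cls hpart hm hlog Ω mΩ μ hμ U hUmeas hUdist hindep
  have hm3 : 3 ≤ m := le_trans (le_max_left _ _) hm
  have hmpos : 0 < m := by omega
  have hmR : (3 : ℝ) ≤ (m : ℝ) := by exact_mod_cast hm3
  have hmRpos : (0 : ℝ) < (m : ℝ) := by linarith
  have hexp : Real.exp (1 / (c * ε)) ≤ (m : ℝ) := by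
    have h1 : Real.exp (1 / (c * ε)) ≤ (Nat.ceil (Real.exp (1 / (c * ε))) : ℝ) := Nat.le_ceil _
    have h2 : Nat.ceil (Real.exp (1 / (c * ε))) + 1 ≤ m :=
      le_trans (le_max_right 3 _) hm
    have h3 : (Nat.ceil (Real.exp (1 / (c * ε))) : ℝ) ≤ (m : ℝ) := by
      exact_mod_cast le_trans (Nat.le_succ _) h2
    linarith
  -- the row maps
  set R : Fin n → Ω → (Fin m → ℝ) := fun i ω j => U (i, j) ω with hRdef
  have hRmeas : ∀ i, Measurable (R i) := fun i =>
    measurable_pi_lambda _ fun j => hUmeas (i, j)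
  set ν : Measure (Fin m → ℝ) := Measure.pi (fun _ : Fin m => D) with hνdef
  -- the law of each row is the i.i.d. product measure
  have rowLaw : ∀ i, μ.map (R i) = ν := by
    intro i
    refine (Measure.pi_eq fun s hs => ?_).symm
    rw [Measure.map_apply (hRmeas i) (MeasurableSet.univ_pi hs)]
    set sets : Fin n × Fin m → Set ℝ := fun e => if e.1 = i then s e.2 else Set.univ
      with hsets
    have hinj : ∀ x ∈ (Finset.univ : Finset (Fin m)), ∀ y ∈ (Finset.univ : Finset (Fin m)),
        ((i, x) : Fin n × Fin m) = (i, y) → x = y := fun x _ y _ h => congrArg Prod.snd h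
    have hpre : R i ⁻¹' Set.pi Set.univ s =
        ⋂ e ∈ Finset.univ.image (fun j => ((i, j) : Fin n × Fin m)), U e ⁻¹' sets e := by
      ext ω
      simp only [Set.mem_preimage, Set.mem_pi, Set.mem_univ, true_implies, Set.mem_iInter,
        Finset.mem_image, Finset.mem_univ, true_and]
      constructor
      · rintro h e ⟨j, rfl⟩
        simpa [hsets] using h j
      · intro h j
        have := h (i, j) ⟨j, rfl⟩
        simpa [hsets] using this
    have hsetsmeas : ∀ e ∈ Finset.univ.image (fun j => ((i, j) : Fin n × Fin m)),
        MeasurableSet (sets e) := by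
      intro e _
      by_cases h : e.1 = i
      · simpa [hsets, h] using hs e.2
      · simp [hsets, h]
    rw [hpre, hindep.measure_inter_preimage_eq_mul _ hsetsmeas,
      Finset.prod_image (f := fun e => μ (U e ⁻¹' sets e)) hinj]
    refine Finset.prod_congr rfl fun j _ => ?_
    have : sets (i, j) = s j := by simp [hsets]
    rw [this, ← hUdist (i, j), Measure.map_apply (hUmeas (i, j)) (hs j)]
  have hq : ∀ i j, μ (R i ⁻¹' Stmt5Aux.topAt j) = ν (Stmt5Aux.topAt j) := fun i j => by
    rw [← Measure.map_apply (hRmeas i) (Stmt5Aux.measurableSet_topAt j), rowLaw i]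
  -- independence of distinct rows
  have hpairIndep : ∀ i i' : Fin n, i ≠ i' → IndepFun (R i) (R i') μ := by
    intro i i' hne
    have hdisj : Disjoint (Finset.univ.image fun j => ((i, j) : Fin n × Fin m))
        (Finset.univ.image fun j => ((i', j) : Fin n × Fin m)) := by
      rw [Finset.disjoint_left]
      intro e he he'
      obtain ⟨j, _, rfl⟩ := Finset.mem_image.mp he
      obtain ⟨j', _, hj'⟩ := Finset.mem_image.mp he'
      exact hne (congrArg Prod.fst hj').symm
    have hfin := hindep.indepFun_finset _ _ hdisj hUmeas
    have hφ : Measurable (fun (g : {x // x ∈ Finset.univ.image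
          fun j => ((i, j) : Fin n × Fin m)} → ℝ) (j : Fin m) =>
        g ⟨(i, j), Finset.mem_image_of_mem _ (Finset.mem_univ j)⟩) :=
      measurable_pi_lambda _ fun j => measurable_pi_apply _
    have hψ : Measurable (fun (g : {x // x ∈ Finset.univ.image
          fun j => ((i', j) : Fin n × Fin m)} → ℝ) (j : Fin m) =>
        g ⟨(i', j), Finset.mem_image_of_mem _ (Finset.mem_univ j)⟩) :=
      measurable_pi_lambda _ fun j => measurable_pi_apply _
    exact hfin.comp hφ hψ
  -- null events
  have hpos_null : ∀ e : Fin n × Fin m, μ {ω | U e ω ≤ 0} = 0 := by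
    intro e
    have h1 : {ω | U e ω ≤ 0} = U e ⁻¹' Set.Iic 0 := rfl
    have h2 : μ (U e ⁻¹' Set.Iic 0) = D (Set.Iic 0) := by
      rw [← hUdist e, Measure.map_apply (hUmeas e) measurableSet_Iic]
    rw [h1, h2]
    have hsub : Set.Iic (0 : ℝ) ⊆ Set.Iio 0 ∪ {0} := by
      intro x hx
      rcases lt_or_eq_of_le (Set.mem_Iic.mp hx) with h | h
      · exact Or.inl h
      · exact Or.inr (by simp [h])
    refine le_antisymm (le_trans (measure_mono hsub) ?_) zero_le'
    refine le_trans (measure_union_le _ _) ?_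
    have hIio : D (Set.Iio 0) = 0 := by
      refine measure_mono_null ?_ hsupp
      intro x hx
      simp only [Set.mem_compl_iff, Set.mem_Icc, not_and_or, not_le]
      exact Or.inl hx
    rw [hIio, hatom 0, zero_add]
  have hties_null : ∀ a b : Fin n × Fin m, a ≠ b → μ {ω | U a ω = U b ω} = 0 := by
    intro a b hab
    have hiab : IndepFun (U a) (U b) μ := hindep.indepFun hab
    have hmap : μ.map (fun ω => (U a ω, U b ω)) = D.prod D := by
      rw [(indepFun_iff_map_prod_eq_prod_map_map (hUmeas a).aemeasurable
        (hUmeas b).aemeasurable).mp hiab, hUdist a, hUdist b]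
    have hdiag : MeasurableSet {p : ℝ × ℝ | p.1 = p.2} :=
      measurableSet_eq_fun measurable_fst measurable_snd
    have h1 : {ω | U a ω = U b ω} = (fun ω => (U a ω, U b ω)) ⁻¹' {p : ℝ × ℝ | p.1 = p.2} := rfl
    rw [h1, ← Measure.map_apply ((hUmeas a).prodMk (hUmeas b)) hdiag, hmap,
      Measure.prod_apply hdiag]
    have hfib : ∀ x : ℝ, D (Prod.mk x ⁻¹' {p : ℝ × ℝ | p.1 = p.2}) = 0 := by
      intro x
      have : Prod.mk x ⁻¹' {p : ℝ × ℝ | p.1 = p.2} = {x} := by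
        ext y; simp [eq_comm]
      rw [this]; exact hatom x
    simp only [hfib]
    simp
  -- the good event
  set A : Fin n → Fin m → Set Ω := fun i j => R i ⁻¹' Stmt5Aux.topAt j with hAdef
  have hAmeas : ∀ i j, MeasurableSet (A i j) := fun i j =>
    hRmeas i (Stmt5Aux.measurableSet_topAt j)
  set G1 : Set Ω := ⋂ e : Fin n × Fin m, {ω | 0 < U e ω} with hG1def
  set G2 : Set Ω := ⋂ a : Fin n × Fin m, ⋂ b : Fin n × Fin m, ⋂ (_ : a ≠ b),
    {ω | U a ω = U b ω}ᶜ with hG2def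
  set G3 : Set Ω := ⋂ i : Fin n, ⋂ i' : Fin n, ⋂ (_ : i ≠ i'), ⋂ j : Fin m,
    (A i j ∩ A i' j)ᶜ with hG3def
  set G : Set Ω := G1 ∩ (G2 ∩ G3) with hGdef
  have hG1meas : MeasurableSet G1 :=
    MeasurableSet.iInter fun e => measurableSet_lt measurable_const (hUmeas e)
  have hG2meas : MeasurableSet G2 :=
    MeasurableSet.iInter fun a => MeasurableSet.iInter fun b => MeasurableSet.iInter fun _ =>
      (measurableSet_eq_fun (hUmeas a) (hUmeas b)).compl
  have hG3meas : MeasurableSet G3 :=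
    MeasurableSet.iInter fun i => MeasurableSet.iInter fun i' => MeasurableSet.iInter fun _ =>
      MeasurableSet.iInter fun j => ((hAmeas i j).inter (hAmeas i' j)).compl
  have hGmeas : MeasurableSet G := hG1meas.inter (hG2meas.inter hG3meas)
  -- probability bounds
  have hG1c : μ G1ᶜ = 0 := by
    rw [hG1def, Set.compl_iInter]
    refine measure_iUnion_null fun e => ?_
    have : {ω | 0 < U e ω}ᶜ = {ω | U e ω ≤ 0} := by
      ext ω; simp [not_lt]
    rw [this]; exact hpos_null e
  have hG2c : μ G2ᶜ = 0 := by
    rw [hG2def, Set.compl_iInter]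
    refine measure_iUnion_null fun a => ?_
    rw [Set.compl_iInter]
    refine measure_iUnion_null fun b => ?_
    rw [Set.compl_iInter]
    refine measure_iUnion_null fun hab => ?_
    rw [compl_compl]
    exact hties_null a b hab
  have hG3c : μ G3ᶜ ≤ (n : ℝ≥0∞) * (n : ℝ≥0∞) * (m : ℝ≥0∞)⁻¹ := by
    have hpair : ∀ i i' : Fin n,
        μ (⋃ (_ : i ≠ i'), ⋃ j : Fin m, A i j ∩ A i' j) ≤ (m : ℝ≥0∞)⁻¹ := by
      intro i i'
      by_cases hii : i = i'
      · have : (⋃ (_ : i ≠ i'), ⋃ j : Fin m, A i j ∩ A i' j) = ∅ := by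
          simp [hii]
        rw [this, measure_empty]
        exact zero_le'
      · calc μ (⋃ (_ : i ≠ i'), ⋃ j : Fin m, A i j ∩ A i' j)
            ≤ μ (⋃ j : Fin m, A i j ∩ A i' j) :=
              measure_mono (Set.iUnion_subset fun _ => subset_rfl)
          _ ≤ ∑ j : Fin m, μ (A i j ∩ A i' j) := measure_iUnion_fintype_le _ _
          _ = ∑ j : Fin m, ν (Stmt5Aux.topAt j) * ν (Stmt5Aux.topAt j) := by
              refine Finset.sum_congr rfl fun j _ => ?_
              rw [(hpairIndep i i' hii).measure_inter_preimage_eq_mul _ _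
                (Stmt5Aux.measurableSet_topAt j) (Stmt5Aux.measurableSet_topAt j),
                hq i j, hq i' j]
          _ ≤ ∑ j : Fin m, (m : ℝ≥0∞)⁻¹ * ν (Stmt5Aux.topAt j) :=
              Finset.sum_le_sum fun j _ =>
                mul_le_mul_left (Stmt5Aux.measure_topAt_le D j) _
          _ = (m : ℝ≥0∞)⁻¹ * ∑ j : Fin m, ν (Stmt5Aux.topAt j) := by
              rw [Finset.mul_sum]
          _ ≤ (m : ℝ≥0∞)⁻¹ * 1 :=
              mul_le_mul_right (Stmt5Aux.sum_measure_topAt_le D m) _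
          _ = (m : ℝ≥0∞)⁻¹ := mul_one _
    calc μ G3ᶜ
        = μ (⋃ i : Fin n, ⋃ i' : Fin n, ⋃ (_ : i ≠ i'), ⋃ j : Fin m, A i j ∩ A i' j) := by
          rw [hG3def]
          simp only [Set.compl_iInter, compl_compl]
      _ ≤ ∑ i : Fin n, μ (⋃ i' : Fin n, ⋃ (_ : i ≠ i'), ⋃ j : Fin m, A i j ∩ A i' j) :=
        measure_iUnion_fintype_le _ _
      _ ≤ ∑ _i : Fin n, ∑ _i' : Fin n, (m : ℝ≥0∞)⁻¹ := by
        refine Finset.sum_le_sum fun i _ => ?_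
        refine le_trans (measure_iUnion_fintype_le _ _) ?_
        exact Finset.sum_le_sum fun i' _ => hpair i i'
      _ = (n : ℝ≥0∞) * (n : ℝ≥0∞) * (m : ℝ≥0∞)⁻¹ := by
        simp [Finset.sum_const, Finset.card_univ, mul_assoc]
  -- arithmetic: n² / m ≤ ε
  have hreal : (n : ℝ) * (n : ℝ) ≤ ε * (m : ℝ) := by
    rcases Nat.eq_zero_or_pos n with hn0 | hnpos
    · subst hn0
      simp only [Nat.cast_zero, mul_zero, zero_mul]
      positivity
    · have hk1 : 1 ≤ k := by
        by_contra hk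
        have hk0 : k = 0 := by omega
        subst hk0
        have := hpart.2.2
        have h0 : (⟨0, hnpos⟩ : Fin n) ∈ Finset.univ.biUnion cls := by
          rw [this]; exact Finset.mem_univ _
        simpa using h0
      have hnk : (n : ℝ) ≤ (k : ℝ) * (ClassEF.maxClassSize cls : ℝ) := by
        have hnat : n ≤ k * ClassEF.maxClassSize cls := by
          have h1 : (Finset.univ : Finset (Fin n)).card = n := by simp
          have h2 := hpart.2.2
          calc n = (Finset.univ.biUnion cls).card := by rw [h2, h1]
            _ ≤ ∑ p : Fin k, (cls p).card := Finset.card_biUnion_le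
            _ ≤ ∑ _p : Fin k, ClassEF.maxClassSize cls :=
              Finset.sum_le_sum fun p _ =>
                show (cls p).card ≤ Finset.univ.sup (fun q => (cls q).card) from
                  Finset.le_sup (f := fun q => (cls q).card) (Finset.mem_univ p)
            _ = k * ClassEF.maxClassSize cls := by
              simp [Finset.sum_const, Finset.card_univ, mul_comm]
        exact_mod_cast hnat
      have hkk : (k : ℝ) ≤ (k : ℝ) ^ 2 := by
        have : (1 : ℝ) ≤ (k : ℝ) := by exact_mod_cast hk1
        nlinarith
      have hmaxnn : (0 : ℝ) ≤ (ClassEF.maxClassSize cls : ℝ) := Nat.cast_nonneg _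
      have hnk2 : (n : ℝ) ≤ (k : ℝ) ^ 2 * (ClassEF.maxClassSize cls : ℝ) := by
        calc (n : ℝ) ≤ (k : ℝ) * (ClassEF.maxClassSize cls : ℝ) := hnk
          _ ≤ (k : ℝ) ^ 2 * (ClassEF.maxClassSize cls : ℝ) :=
            mul_le_mul_of_nonneg_right hkk hmaxnn
      have hnn : (0 : ℝ) ≤ (n : ℝ) := Nat.cast_nonneg _
      have hsq : (n : ℝ) ^ 2 ≤ ((k : ℝ) ^ 2 * (ClassEF.maxClassSize cls : ℝ)) ^ 2 :=
        pow_le_pow_left₀ hnn hnk2 2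
      have hlogpos : 0 < Real.log m := Real.log_pos (by linarith)
      have hcn2 : c * (n : ℝ) ^ 2 ≤ (m : ℝ) / Real.log m := by
        calc c * (n : ℝ) ^ 2
            ≤ c * ((k : ℝ) ^ 2 * (ClassEF.maxClassSize cls : ℝ)) ^ 2 :=
              mul_le_mul_of_nonneg_left hsq hc.le
          _ ≤ (m : ℝ) / Real.log m := hlog
      have h1 : c * (n : ℝ) ^ 2 * Real.log m ≤ (m : ℝ) :=
        (le_div_iff₀ hlogpos).mp hcn2
      have hcε : 0 < c * ε := mul_pos hc hε
      have hloge : 1 / (c * ε) ≤ Real.log m := by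
        rw [Real.le_log_iff_exp_le hmRpos]
        exact hexp
      have h2 : 1 ≤ Real.log m * (c * ε) := (div_le_iff₀ hcε).mp hloge
      nlinarith [sq_nonneg ((n : ℝ)), mul_le_mul_of_nonneg_left h1 hε.le,
        mul_le_mul_of_nonneg_right h2 (mul_nonneg hnn hnn)]
  have hENN : (n : ℝ≥0∞) * (n : ℝ≥0∞) * (m : ℝ≥0∞)⁻¹ ≤ ENNReal.ofReal ε := by
    have hcast : (n : ℝ≥0∞) * (n : ℝ≥0∞) ≤ ENNReal.ofReal ε * (m : ℝ≥0∞) := by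
      rw [← ENNReal.ofReal_natCast n, ← ENNReal.ofReal_natCast m,
        ← ENNReal.ofReal_mul (Nat.cast_nonneg n), ← ENNReal.ofReal_mul hε.le]
      exact ENNReal.ofReal_le_ofReal hreal
    calc (n : ℝ≥0∞) * (n : ℝ≥0∞) * (m : ℝ≥0∞)⁻¹
        ≤ ENNReal.ofReal ε * (m : ℝ≥0∞) * (m : ℝ≥0∞)⁻¹ := mul_le_mul_left hcast _
      _ = ENNReal.ofReal ε * ((m : ℝ≥0∞) * (m : ℝ≥0∞)⁻¹) := mul_assoc _ _ _
      _ = ENNReal.ofReal ε := by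
          have hmne : (m : ℝ≥0∞) ≠ 0 := Nat.cast_ne_zero.mpr (by omega)
          rw [ENNReal.mul_inv_cancel hmne (ENNReal.natCast_ne_top m), mul_one]
  have hGc : μ Gᶜ ≤ ENNReal.ofReal ε := by
    calc μ Gᶜ = μ (G1ᶜ ∪ (G2 ∩ G3)ᶜ) := by rw [hGdef, Set.compl_inter]
      _ ≤ μ G1ᶜ + μ (G2 ∩ G3)ᶜ := measure_union_le _ _
      _ = μ (G2 ∩ G3)ᶜ := by rw [hG1c, zero_add]
      _ = μ (G2ᶜ ∪ G3ᶜ) := by rw [Set.compl_inter]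
      _ ≤ μ G2ᶜ + μ G3ᶜ := measure_union_le _ _
      _ = μ G3ᶜ := by rw [hG2c, zero_add]
      _ ≤ (n : ℝ≥0∞) * (n : ℝ≥0∞) * (m : ℝ≥0∞)⁻¹ := hG3c
      _ ≤ ENNReal.ofReal ε := hENN
  -- the good event implies the conclusion
  have hGsub : G ⊆ {ω | ∀ M : Finset (Fin n × Fin m),
      ClassEF.IsMaxWeightMatching (fun i j => U (i, j) ω) M →
      ClassEF.ClassEnvyFree (fun i j => U (i, j) ω) cls M} := by
    intro ω hω
    obtain ⟨hω1, hω2, hω3⟩ := hω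
    have hp1 : ∀ e : Fin n × Fin m, 0 < U e ω := fun e => Set.mem_iInter.mp hω1 e
    have hp2 : ∀ a b : Fin n × Fin m, a ≠ b → U a ω ≠ U b ω := by
      intro a b hab
      have := Set.mem_iInter.mp (Set.mem_iInter.mp (Set.mem_iInter.mp hω2 a) b) hab
      exact this
    have hp3 : ∀ i i' : Fin n, i ≠ i' → ∀ j, ¬(ω ∈ A i j ∧ ω ∈ A i' j) := by
      intro i i' hne j
      have := Set.mem_iInter.mp (Set.mem_iInter.mp
        (Set.mem_iInter.mp (Set.mem_iInter.mp hω3 i) i') hne) j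
      intro hcon
      exact this ⟨hcon.1, hcon.2⟩
    intro M hMW
    choose t htmem htmax using fun i : Fin n =>
      Finset.exists_max_image Finset.univ (fun j => U (i, j) ω) ⟨⟨0, hmpos⟩, Finset.mem_univ _⟩
    have htle : ∀ i j, U (i, j) ω ≤ U (i, t i) ω := fun i j => htmax i j (Finset.mem_univ j)
    have hstrict : ∀ i j, j ≠ t i → U (i, j) ω < U (i, t i) ω := by
      intro i j hne
      exact lt_of_le_of_ne (htle i j) (hp2 (i, j) (i, t i) (by simp [hne]))
    have hmemA : ∀ i, ω ∈ A i (t i) := by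
      intro i
      intro j' hj'
      exact hstrict i j' hj'
    have htinj : Function.Injective t := by
      intro a b hab
      by_contra hne
      exact hp3 a b hne (t a) ⟨hmemA a, by rw [hab]; exact hmemA b⟩
    exact Stmt5Aux.cef_of_distinct_favorites (fun i j => U (i, j) ω)
      (fun i j => hp1 (i, j)) t htle hstrict htinj cls hMW
  calc ENNReal.ofReal (1 - ε) = 1 - ENNReal.ofReal ε := by
        rw [ENNReal.ofReal_sub _ hε.le, ENNReal.ofReal_one]
    _ ≤ 1 - μ Gᶜ := tsub_le_tsub_left hGc _
    _ = μ G := by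
        rw [prob_compl_eq_one_sub hGmeas]
        exact ENNReal.sub_sub_cancel ENNReal.one_ne_top prob_le_one
    _ ≤ μ _ := measure_mono hGsub
end
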